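/- arXiv:1703.04367 — 3 statements merged into one kernel-verified Lean document; each statement's English description precedes it below -/
import Mathlib

section
/- The threshold protocol P_thr satisfies LayeredTermination. In particular, with L₀ = {(1,x,0) : c ≤ x ≤ vmax}, L₁ = {(1,x,1) : −vmax ≤ x < c}, N₀ = {(0,0,0)}, N₁ = {(0,0,1)}, the ordered partition (T₁, T₂) with T₁ = {t ∈ T : pre(t) ≠ ⟦q,r⟧ for all q ∈ L₀, r ∈ N₁} and T₂ = T ∖ T₁ witnesses LayeredTermination when c > 0, and the ordered partition (S₁, S₂) with S₁ = {t ∈ T : pre(t) ≠ ⟦q,r⟧ for all q ∈ L₁, r ∈ N₀} and S₂ = T ∖ S₁ witnesses it when c ≤ 0. -/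
/-! Formalization of population protocols (Angluin et al.), following
"Towards Efficient Verification of Population Protocols". -/

namespace PopProt

/-- A transition `(p, q) ↦ (p', q')`. -/
abbrev PTrans (Q : Type*) := Q × Q × Q × Q

variable {Q : Type*} [Fintype Q] [DecidableEq Q]

/-- `pre t` is the multiset of the two states consumed by transition `t`. -/
def pre (t : PTrans Q) : Multiset Q := {t.1, t.2.1}

/-- `post t` is the multiset of the two states produced by transition `t`. -/
def post (t : PTrans Q) : Multiset Q := {t.2.2.1, t.2.2.2}

/-- A transition is silent if it cannot change the current configuration. -/
def SilentT (t : PTrans Q) : Prop := pre t = post t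

instance : DecidablePred (SilentT (Q := Q)) := fun t => by
  unfold SilentT; infer_instance

/-- Transitions of the form `(p, q) ↦ (p, q)`. -/
def IsSilentPair (t : PTrans Q) : Prop := ∃ p q : Q, t = (p, q, p, q)

instance : DecidablePred (IsSilentPair (Q := Q)) := fun t => by
  unfold IsSilentPair; infer_instance

/-- A population protocol with states `Q` and input alphabet `A`.
Configurations are multisets over `Q` of cardinality at least 2. -/
structure Protocol (Q A : Type*) [Fintype Q] [DecidableEq Q] [Fintype A] where
  T : Finset (PTrans Q)
  total : ∀ p q : Q, ∃ p' q' : Q, (p, q, p', q') ∈ T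
  inp : A → Q
  out : Q → Bool

/-- `C →t C'`. -/
def StepBy (t : PTrans Q) (C C' : Multiset Q) : Prop :=
  pre t ≤ C ∧ C' = C - pre t + post t

/-- One step of the protocol with transition set `T`. -/
def Step (T : Finset (PTrans Q)) (C C' : Multiset Q) : Prop :=
  ∃ t ∈ T, StepBy t C C'

/-- Reachability `C →* C'`. -/
def Reach (T : Finset (PTrans Q)) : Multiset Q → Multiset Q → Prop :=
  Relation.ReflTransGen (Step T)

/-- `C →w C'` for a finite sequence `w` of transitions. -/
def SeqStep (T : Finset (PTrans Q)) : List (PTrans Q) → Multiset Q → Multiset Q → Prop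
  | [], C, C' => C' = C
  | t :: w, C, C' => t ∈ T ∧ ∃ D, StepBy t C D ∧ SeqStep T w D C'

/-- An execution: an infinite sequence of configurations related by steps. -/
def IsExec (T : Finset (PTrans Q)) (e : ℕ → Multiset Q) : Prop :=
  2 ≤ Multiset.card (e 0) ∧ ∀ i, Step T (e i) (e (i + 1))

/-- Fairness: if a step `C → C'` is possible and `C` occurs infinitely often,
then the step is taken infinitely often. -/
def Fair (T : Finset (PTrans Q)) (e : ℕ → Multiset Q) : Prop :=
  ∀ C C' : Multiset Q, Step T C C' →
    {i | e i = C}.Infinite → {j | e j = C ∧ e (j + 1) = C'}.Infinite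

/-- An execution is silent if it is eventually constant. -/
def SilentExec (e : ℕ → Multiset Q) : Prop := ∃ n : ℕ, ∀ i ≥ n, e i = e n

/-- A configuration is terminal if every transition enabled at it is silent. -/
def Terminal (T : Finset (PTrans Q)) (C : Multiset Q) : Prop :=
  ∀ t ∈ T, pre t ≤ C → SilentT t

/-- `C` is a consensus configuration with output `b`. -/
def Consensus (out : Q → Bool) (C : Multiset Q) (b : Bool) : Prop :=
  ∀ q ∈ C, out q = b

/-- An execution stabilizes to `b`. -/
def Stabilizes (out : Q → Bool) (e : ℕ → Multiset Q) (b : Bool) : Prop :=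
  ∃ n : ℕ, ∀ i ≥ n, Consensus out (e i) b

variable {A : Type*} [Fintype A]

/-- The initial configuration determined by input `X`. -/
def init (P : Protocol Q A) (X : Multiset A) : Multiset Q := X.map P.inp

/-- A protocol is silent if every fair execution from every configuration is silent. -/
def IsSilentProtocol (P : Protocol Q A) : Prop :=
  ∀ e : ℕ → Multiset Q, IsExec P.T e → Fair P.T e → SilentExec e

/-- A protocol is well-specified if for every input every fair execution from the
corresponding initial configuration stabilizes to a common boolean value. -/
def WellSpecified (P : Protocol Q A) : Prop :=
  ∀ X : Multiset A, 2 ≤ Multiset.card X → ∃ b : Bool,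
    ∀ e : ℕ → Multiset Q, e 0 = init P X → (∀ i, Step P.T (e i) (e (i + 1))) →
      Fair P.T e → Stabilizes P.out e b

/-- A protocol computes the predicate `φ`. -/
def Computes (P : Protocol Q A) (φ : Multiset A → Bool) : Prop :=
  ∀ X : Multiset A, 2 ≤ Multiset.card X →
    ∀ e : ℕ → Multiset Q, e 0 = init P X → (∀ i, Step P.T (e i) (e (i + 1))) →
      Fair P.T e → Stabilizes P.out e (φ X)

/-- Termination: from every configuration some terminal configuration is reachable. -/
def Termination (P : Protocol Q A) : Prop :=
  ∀ C : Multiset Q, 2 ≤ Multiset.card C →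
    ∃ C' : Multiset Q, Reach P.T C C' ∧ Terminal P.T C'

/-- NoSplitTerminal: all terminal configurations reachable from an initial configuration
are consensus configurations with one common output. -/
def NoSplitTerminal (P : Protocol Q A) : Prop :=
  ∀ X : Multiset A, 2 ≤ Multiset.card X → ∃ b : Bool,
    ∀ C' : Multiset Q, Reach P.T (init P X) C' → Terminal P.T C' →
      Consensus P.out C' b

/-- All transitions of the form `(p, q) ↦ (p, q)`. -/
def silents (Q : Type*) [Fintype Q] [DecidableEq Q] : Finset (PTrans Q) :=
  Finset.univ.image fun pq : Q × Q => (pq.1, pq.2, pq.1, pq.2)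

/-- The transition set of the induced protocol `P[S]`. -/
def induced (S : Finset (PTrans Q)) : Finset (PTrans Q) := S ∪ silents Q

/-- `(Ts 0, …, Ts (n-1))` is an ordered partition witnessing LayeredTermination. -/
def LayeredWitness (P : Protocol Q A) (n : ℕ) (Ts : Fin n → Finset (PTrans Q)) : Prop :=
  (∀ i, (Ts i).Nonempty) ∧
  (∀ i j, i ≠ j → Disjoint (Ts i) (Ts j)) ∧
  Finset.univ.biUnion Ts = P.T ∧
  ∀ i : Fin n,
    (∀ e : ℕ → Multiset Q, IsExec (induced (Ts i)) e → SilentExec e) ∧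
    (∀ C C' : Multiset Q, 2 ≤ Multiset.card C →
      Reach (induced (Ts i)) C C' →
      Terminal (induced ((Finset.univ.filter fun j => j < i).biUnion Ts)) C →
      Terminal (induced ((Finset.univ.filter fun j => j < i).biUnion Ts)) C')

/-- LayeredTermination. -/
def LayeredTermination (P : Protocol Q A) : Prop :=
  ∃ (n : ℕ) (Ts : Fin n → Finset (PTrans Q)), LayeredWitness P n Ts

/-- `•R`, relative to the transition set `T`. -/
def preSetOf (T : Finset (PTrans Q)) (R : Finset Q) : Finset (PTrans Q) :=
  T.filter fun t => ∃ q ∈ R, q ∈ post t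

/-- `R•`, relative to the transition set `T`. -/
def postSetOf (T : Finset (PTrans Q)) (R : Finset Q) : Finset (PTrans Q) :=
  T.filter fun t => ∃ q ∈ R, q ∈ pre t

/-- `R` is a `U`-trap: `R• ∩ U ⊆ •R`. -/
def IsTrap (T U : Finset (PTrans Q)) (R : Finset Q) : Prop :=
  postSetOf T R ∩ U ⊆ preSetOf T R

/-- `R` is a `U`-siphon: `•R ∩ U ⊆ R•`. -/
def IsSiphon (T U : Finset (PTrans Q)) (R : Finset Q) : Prop :=
  preSetOf T R ∩ U ⊆ postSetOf T R

/-- The flow equations for `(C, C', x)`. -/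
def FlowEq (T : Finset (PTrans Q)) (C C' : Multiset Q) (x : PTrans Q → ℕ) : Prop :=
  ∀ q : Q, (C'.count q : ℤ) =
    (C.count q : ℤ) + ∑ t ∈ T, (x t : ℤ) * (((post t).count q : ℤ) - ((pre t).count q : ℤ))

/-- The support of `x` within `T`. -/
def suppIn (T : Finset (PTrans Q)) (x : PTrans Q → ℕ) : Finset (PTrans Q) :=
  T.filter fun t => x t ≠ 0

/-- Potential reachability `C ⇒ₓ C'` (flow equations plus trap and siphon constraints,
with `U = supp x`). -/
def PotReach (T : Finset (PTrans Q)) (C C' : Multiset Q) (x : PTrans Q → ℕ) : Prop :=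
  FlowEq T C C' x ∧
  (∀ R : Finset Q, IsTrap T (suppIn T x) R → (∀ q ∈ R, q ∉ C') →
    preSetOf T R ∩ suppIn T x = ∅) ∧
  (∀ R : Finset Q, IsSiphon T (suppIn T x) R → (∀ q ∈ R, q ∉ C) →
    postSetOf T R ∩ suppIn T x = ∅)

/-- StrongConsensus: all terminal configurations potentially reachable from an initial
configuration are consensus configurations with one common output. -/
def StrongConsensus (P : Protocol Q A) : Prop :=
  ∀ X : Multiset A, 2 ≤ Multiset.card X → ∃ b : Bool,
    ∀ (C' : Multiset Q) (x : PTrans Q → ℕ),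
      PotReach P.T (init P X) C' x → Terminal P.T C' → Consensus P.out C' b

/-- `C` is `U`-dead: no transition of `U` can change `C`. -/
def UDeadConf (U : Finset (PTrans Q)) (C : Multiset Q) : Prop :=
  ∀ t ∈ U, ∀ C' : Multiset Q, StepBy t C C' → C' = C

/-- The protocol with transitions `T` is `U`-dead: from every `U`-dead configuration,
every reachable configuration is `U`-dead. -/
def UDead (T U : Finset (PTrans Q)) : Prop :=
  ∀ C₀ : Multiset Q, 2 ≤ Multiset.card C₀ → UDeadConf U C₀ →
    ∀ C : Multiset Q, Reach T C₀ C → UDeadConf U C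

end PopProt
namespace PopProt

section Threshold

variable (k : ℕ) (a : Fin k → ℤ) (c : ℤ)

/-- `vmax = max(|a₁|, …, |a_k|, |c| + 1)`. -/
def vmax : ℤ := max ((Finset.univ.sup fun i : Fin k => (a i).natAbs : ℕ) : ℤ) (|c| + 1)

lemma vmax_pos : 0 < vmax k a c := by
  have h : (0 : ℤ) ≤ |c| := abs_nonneg c
  exact lt_max_of_lt_right (by omega)

/-- The value range `[-vmax, vmax]`. -/
abbrev Vr := ↥(Finset.Icc (-(vmax k a c)) (vmax k a c))

/-- States of the threshold protocol: a leader bit, a value and an opinion. -/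
abbrev Qthr := Bool × Vr k a c × Bool

/-- `f(m, n) = max(-vmax, min(vmax, m + n))`. -/
def fthr (m n : ℤ) : ℤ := max (-(vmax k a c)) (min (vmax k a c) (m + n))

/-- `g(m, n) = (m + n) - f(m, n)`. -/
def gthr (m n : ℤ) : ℤ := m + n - fthr k a c m n

/-- `b(m, n) = (f(m, n) < c)`. -/
def bthr (m n : ℤ) : Bool := decide (fthr k a c m n < c)

lemma fthr_mem (m n : ℤ) : fthr k a c m n ∈ Finset.Icc (-(vmax k a c)) (vmax k a c) := by
  have h := vmax_pos k a c
  simp only [Finset.mem_Icc, fthr]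
  exact ⟨le_max_left _ _, max_le (by omega) (min_le_left _ _)⟩

lemma gthr_mem (m n : ℤ) (hm : m ∈ Finset.Icc (-(vmax k a c)) (vmax k a c))
    (hn : n ∈ Finset.Icc (-(vmax k a c)) (vmax k a c)) :
    gthr k a c m n ∈ Finset.Icc (-(vmax k a c)) (vmax k a c) := by
  have h := vmax_pos k a c
  simp only [Finset.mem_Icc] at hm hn ⊢
  simp only [gthr, fthr]
  rw [max_def, min_def]
  split_ifs <;> omega

/-- `f` on the value range. -/
def fV (m n : Vr k a c) : Vr k a c := ⟨fthr k a c m n, fthr_mem k a c m n⟩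

/-- `g` on the value range. -/
def gV (m n : Vr k a c) : Vr k a c := ⟨gthr k a c m n, gthr_mem k a c m n m.2 n.2⟩

instance : DecidableEq (Vr k a c) := by unfold Vr; infer_instance

noncomputable instance : Fintype (Vr k a c) := by unfold Vr; infer_instance

instance : DecidableEq (Qthr k a c) := by infer_instance

noncomputable instance : Fintype (Qthr k a c) := by infer_instance

/-- Non-silent transitions of the threshold protocol:
`(1, n, o), (l, n', o') ↦ (1, f(n, n'), b(n, n')), (0, g(n, n'), b(n, n'))`. -/
def IsThrTrans (t : PTrans (Qthr k a c)) : Prop :=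
  ∃ (n n' : Vr k a c) (l o o' : Bool),
    t = ((true, n, o), (l, n', o'),
         (true, fV k a c n n', bthr k a c (n : ℤ) (n' : ℤ)),
         (false, gV k a c n n', bthr k a c (n : ℤ) (n' : ℤ)))

noncomputable instance : DecidablePred (IsThrTrans k a c) := fun t => by
  unfold IsThrTrans; infer_instance

/-- Transition set of the threshold protocol. -/
noncomputable def Tthr : Finset (PTrans (Qthr k a c)) :=
  Finset.univ.filter fun t => IsThrTrans k a c t ∨ IsSilentPair t

lemma a_mem (i : Fin k) : a i ∈ Finset.Icc (-(vmax k a c)) (vmax k a c) := by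
  have h1 : (a i).natAbs ≤ Finset.univ.sup fun j : Fin k => (a j).natAbs :=
    Finset.le_sup (f := fun j : Fin k => (a j).natAbs) (Finset.mem_univ i)
  have h2 : ((Finset.univ.sup fun j : Fin k => (a j).natAbs : ℕ) : ℤ) ≤ vmax k a c :=
    le_max_left _ _
  simp only [Finset.mem_Icc]
  omega

/-- The threshold protocol `P_thr` computing `a₁x₁ + ⋯ + a_kx_k < c`. -/
noncomputable def Pthr : Protocol (Qthr k a c) (Fin k) where
  T := Tthr k a c
  total := fun p q => ⟨p, q, by
    simp only [Tthr, Finset.mem_filter, Finset.mem_univ, true_and]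
    exact Or.inr ⟨p, q, rfl⟩⟩
  inp := fun i => (true, ⟨a i, a_mem k a c i⟩, decide (a i < c))
  out := fun q => q.2.2

/-- `val(C) = Σ_q C(q) · val(q)` where `val(ℓ, n, o) = n`. -/
def valC (C : Multiset (Qthr k a c)) : ℤ := (C.map fun q => ((q.2.1 : ℤ))).sum

/-- `C` contains a leader. -/
def hasLeader (C : Multiset (Qthr k a c)) : Prop := ∃ q ∈ C, q.1 = true

/-- The value `0` of the value range. -/
def zeroV : Vr k a c :=
  ⟨0, by have := vmax_pos k a c; simp only [Finset.mem_Icc]; omega⟩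

/-- `L₀ = {(1, x, 0) : c ≤ x ≤ vmax}`. -/
noncomputable def L0set : Finset (Qthr k a c) :=
  Finset.univ.filter fun q =>
    q.1 = true ∧ q.2.2 = false ∧ c ≤ (q.2.1 : ℤ) ∧ (q.2.1 : ℤ) ≤ vmax k a c

/-- `L₁ = {(1, x, 1) : -vmax ≤ x < c}`. -/
noncomputable def L1set : Finset (Qthr k a c) :=
  Finset.univ.filter fun q =>
    q.1 = true ∧ q.2.2 = true ∧ -(vmax k a c) ≤ (q.2.1 : ℤ) ∧ (q.2.1 : ℤ) < c

/-- `N₀ = {(0, 0, 0)}`. -/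
def N0set : Finset (Qthr k a c) := {(false, zeroV k a c, false)}

/-- `N₁ = {(0, 0, 1)}`. -/
def N1set : Finset (Qthr k a c) := {(false, zeroV k a c, true)}

/-- `T₁ = {t ∈ T : pre t ≠ ⟦q, r⟧ for all q ∈ L₀, r ∈ N₁}`. -/
noncomputable def T1thr : Finset (PTrans (Qthr k a c)) :=
  (Tthr k a c).filter fun t => ∀ q ∈ L0set k a c, ∀ r ∈ N1set k a c, pre t ≠ {q, r}

/-- `T₂ = T ∖ T₁`. -/
noncomputable def T2thr : Finset (PTrans (Qthr k a c)) := Tthr k a c \ T1thr k a c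

/-- `S₁ = {t ∈ T : pre t ≠ ⟦q, r⟧ for all q ∈ L₁, r ∈ N₀}`. -/
noncomputable def S1thr : Finset (PTrans (Qthr k a c)) :=
  (Tthr k a c).filter fun t => ∀ q ∈ L1set k a c, ∀ r ∈ N0set k a c, pre t ≠ {q, r}

/-- `S₂ = T ∖ S₁`. -/
noncomputable def S2thr : Finset (PTrans (Qthr k a c)) := Tthr k a c \ S1thr k a c

end Threshold

end PopProt

/-!
Both partitions are instances of one construction, indexed by `β : Bool`: the second layer
consists of the flips `(1, x, ¬β), (0, 0, β) ↦ (1, x, ¬β), (0, 0, ¬β)` with `b(x, 0) = ¬β`, and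
the first layer of all other transitions; `β = 1` gives `(T₁, T₂)` and `β = 0` gives `(S₁, S₂)`,
whatever the sign of `c`.

Every non-silent transition of the first layer decreases a weight in which a leader costs more
than any non-leader, plus 2 if its opinion is not `x < c` for its value `x`, and a non-leader of
value `n` costs `2|n|`, plus 1 if its opinion is not the one expected for `n`: the value
`g(n, n')` handed to the non-leader is never larger than `n'` in absolute value, and when it is
as large, the values do not move and only the opinions improve, unless the transition is a flip.
The second layer decreases the number of agents `(0, 0, β)`. A configuration that is terminal for
the first layer has at most one leader, so the agent `(0, 0, ¬β)` produced by a flip can only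
meet that leader, in a silent interaction: flips preserve terminality for the first layer.
-/

namespace PopProt

section Protocol

variable {Q : Type*} [DecidableEq Q]

lemma StepBy.eq_of_silentT {t : PTrans Q} {C C' : Multiset Q} (h : StepBy t C C')
    (ht : SilentT t) : C' = C := by
  rw [h.2, ← ht, tsub_add_cancel_of_le h.1]

lemma StepBy.map_sum_add {t : PTrans Q} {C C' : Multiset Q} (h : StepBy t C C') (w : Q → ℕ) :
    (C'.map w).sum + ((pre t).map w).sum = (C.map w).sum + ((post t).map w).sum := by
  conv_rhs => rw [← tsub_add_cancel_of_le h.1]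
  rw [h.2]
  simp only [Multiset.map_add, Multiset.sum_add]
  ring

lemma StepBy.le_cons {t : PTrans Q} {C C' : Multiset Q} (h : StepBy t C C')
    (ht : t.2.2.1 = t.1) : C' ≤ t.2.2.2 ::ₘ C := by
  obtain ⟨hle, rfl⟩ := h
  rw [Multiset.le_iff_count]
  intro x
  have hx := Multiset.le_iff_count.1 hle x
  simp only [pre, post, ht, Multiset.insert_eq_cons, Multiset.count_add, Multiset.count_sub,
    Multiset.count_cons, Multiset.count_singleton] at hx ⊢
  split_ifs at hx ⊢ <;> omega

variable [Fintype Q]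

lemma silentT_of_mem_silents {t : PTrans Q} (h : t ∈ silents Q) : SilentT t := by
  obtain ⟨pq, -, rfl⟩ := Finset.mem_image.1 h
  rfl

lemma silentExec_of_weight {S : Finset (PTrans Q)} (w : Q → ℕ)
    (hw : ∀ t ∈ S, ¬SilentT t → ((post t).map w).sum < ((pre t).map w).sum)
    {e : ℕ → Multiset Q} (he : IsExec (induced S) e) : SilentExec e := by
  let μ : ℕ → ℕ := fun i => ((e i).map w).sum
  have hstep : ∀ i, e (i + 1) = e i ∨ μ (i + 1) < μ i := by
    intro i
    obtain ⟨t, ht, hst⟩ := he.2 i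
    by_cases hs : SilentT t
    · exact Or.inl (hst.eq_of_silentT hs)
    · have htS : t ∈ S := (Finset.mem_union.1 ht).resolve_right (mt silentT_of_mem_silents hs)
      have := hst.map_sum_add w
      have := hw t htS hs
      exact Or.inr (by simp only [μ]; omega)
  have hmin : ∀ i, μ (Function.argmin μ) ≤ μ i := fun i => Function.argmin_le μ i
  refine ⟨Function.argmin μ, fun i hi => ?_⟩
  induction i, hi using Nat.le_induction with
  | base => rfl
  | succ i _ ih =>
    rcases hstep i with h | h
    · rw [h, ih]
    · have hμ : μ i = μ (Function.argmin μ) := congrArg (fun C => (C.map w).sum) ih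
      exact absurd (hmin (i + 1)) (by omega)

lemma terminal_induced_empty (C : Multiset Q) : Terminal (induced ∅) C := fun _ ht _ =>
  silentT_of_mem_silents (by simpa [induced] using ht)

lemma layeredWitness_two {A : Type*} [Fintype A] {P : Protocol Q A}
    {T₁ T₂ : Finset (PTrans Q)}
    (hne₁ : T₁.Nonempty) (hne₂ : T₂.Nonempty) (hdisj : Disjoint T₁ T₂) (hT : T₁ ∪ T₂ = P.T)
    (hsilent₁ : ∀ e, IsExec (induced T₁) e → SilentExec e)
    (hsilent₂ : ∀ e, IsExec (induced T₂) e → SilentExec e)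
    (hterm : ∀ C C', Reach (induced T₂) C C' → Terminal (induced T₁) C →
      Terminal (induced T₁) C') :
    LayeredWitness P 2 ![T₁, T₂] := by
  refine ⟨Fin.forall_fin_two.2 ⟨hne₁, hne₂⟩, ?_, ?_,
    Fin.forall_fin_two.2 ⟨⟨hsilent₁, ?_⟩, ⟨hsilent₂, ?_⟩⟩⟩
  · intro i j hij
    fin_cases i <;> fin_cases j <;> simp_all [hdisj.symm]
  · rw [← hT]
    ext t
    simp [Fin.exists_fin_two]
  · have h0 : (Finset.univ.filter fun j : Fin 2 => j < 0).biUnion ![T₁, T₂] = ∅ := by simp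
    intro _ C' _ _ _
    rw [h0]
    exact terminal_induced_empty C'
  · have h1 : (Finset.univ.filter fun j : Fin 2 => j < 1).biUnion ![T₁, T₂] = T₁ := by
      ext t
      simp [Fin.lt_one_iff]
    intro C C' _ hreach hC
    rw [h1] at hC ⊢
    exact hterm C C' hreach hC

end Protocol

lemma toNat_bne_lt (o o' b e : Bool) (hs : ¬(o = b ∧ o' = b))
    (he : b = e ∨ ¬(o = b ∧ o' = e)) :
    (b != e).toNat < 2 * (o != b).toNat + (o' != e).toNat := by
  revert o o' b e
  decide

/-- A non-leader with a nonzero value is only ever created next to a leader saturated at `vmax`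
(opinion `0`) or at `-vmax` (opinion `1`). -/
def expectedOpinion (β : Bool) (n : ℤ) : Bool := if n = 0 then β else decide (n < 0)

section Threshold

variable (k : ℕ) (a : Fin k → ℤ) (c : ℤ)

lemma abs_lt_vmax : |c| < vmax k a c := by
  have := le_max_right ((Finset.univ.sup fun i : Fin k => (a i).natAbs : ℕ) : ℤ) (|c| + 1)
  rw [vmax]
  omega

lemma exists_decide_lt_eq (o : Bool) : ∃ n : Vr k a c, decide ((n : ℤ) < c) = o := by
  have := abs_lt_vmax k a c
  have := le_abs_self c
  have := neg_abs_le c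
  cases o
  · exact ⟨⟨vmax k a c, Finset.mem_Icc.2 ⟨by omega, le_rfl⟩⟩,
      decide_eq_false (by simp only; omega)⟩
  · exact ⟨⟨-vmax k a c, Finset.mem_Icc.2 ⟨le_rfl, by omega⟩⟩,
      decide_eq_true (by simp only; omega)⟩

def thrTrans (n n' : Vr k a c) (l o o' : Bool) : PTrans (Qthr k a c) :=
  ((true, n, o), (l, n', o'), (true, fV k a c n n', bthr k a c n n'),
    (false, gV k a c n n', bthr k a c n n'))

def IsFlip (β : Bool) (t : PTrans (Qthr k a c)) : Prop :=
  ∃ n : Vr k a c, decide ((n : ℤ) < c) = !β ∧ pre t = {(true, n, !β), (false, zeroV k a c, β)}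

noncomputable instance (β : Bool) : DecidablePred (IsFlip k a c β) := fun t => by
  unfold IsFlip; infer_instance

noncomputable def flipFree (β : Bool) : Finset (PTrans (Qthr k a c)) :=
  (Tthr k a c).filter fun t => ¬IsFlip k a c β t

noncomputable def flips (β : Bool) : Finset (PTrans (Qthr k a c)) :=
  (Tthr k a c).filter (IsFlip k a c β)

lemma T1thr_eq : T1thr k a c = flipFree k a c true := by
  refine Finset.filter_congr fun t _ => ?_
  simp only [L0set, N1set, IsFlip, Finset.mem_filter, Finset.mem_univ, true_and,
    Finset.mem_singleton, forall_eq, not_exists, not_and, Bool.not_true, decide_eq_false_iff_not,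
    not_lt]
  constructor
  · exact fun h x hx => h (true, x, false) ⟨rfl, rfl, hx, (Finset.mem_Icc.1 x.2).2⟩
  · rintro h ⟨ℓ, x, o⟩ ⟨rfl, rfl, hx, -⟩
    exact h x hx

lemma S1thr_eq : S1thr k a c = flipFree k a c false := by
  refine Finset.filter_congr fun t _ => ?_
  simp only [L1set, N0set, IsFlip, Finset.mem_filter, Finset.mem_univ, true_and,
    Finset.mem_singleton, forall_eq, not_exists, not_and, Bool.not_false, decide_eq_true_iff]
  constructor
  · exact fun h x hx => h (true, x, true) ⟨rfl, rfl, (Finset.mem_Icc.1 x.2).1, hx⟩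
  · rintro h ⟨ℓ, x, o⟩ ⟨rfl, rfl, -, hx⟩
    exact h x hx

lemma T2thr_eq : T2thr k a c = flips k a c true := by
  ext t
  simp only [T2thr, T1thr_eq, flipFree, flips, Finset.mem_sdiff, Finset.mem_filter]
  tauto

lemma S2thr_eq : S2thr k a c = flips k a c false := by
  ext t
  simp only [S2thr, S1thr_eq, flipFree, flips, Finset.mem_sdiff, Finset.mem_filter]
  tauto

def layerWeight (β : Bool) (q : Qthr k a c) : ℕ :=
  if q.1 then 2 * (vmax k a c).toNat + 2 + 2 * (q.2.2 != decide ((q.2.1 : ℤ) < c)).toNat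
  else 2 * (q.2.1 : ℤ).natAbs + (q.2.2 != expectedOpinion β q.2.1).toNat

def flipWeight (β : Bool) (q : Qthr k a c) : ℕ := if q = (false, zeroV k a c, β) then 1 else 0

variable {k a c}

lemma fthr_zero (n : Vr k a c) : fthr k a c n 0 = n := by
  have := Finset.mem_Icc.1 n.2
  simp only [fthr]
  omega

lemma fV_zeroV (n : Vr k a c) : fV k a c n (zeroV k a c) = n := Subtype.ext (fthr_zero n)

lemma gV_zeroV (n : Vr k a c) : gV k a c n (zeroV k a c) = zeroV k a c :=
  Subtype.ext (by simp [gV, gthr, zeroV, fthr_zero])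

lemma bthr_zeroV (n : Vr k a c) : bthr k a c n (zeroV k a c) = decide ((n : ℤ) < c) := by
  simp [bthr, zeroV, fthr_zero]

lemma natAbs_gthr_le (n : Vr k a c) (n' : ℤ) : (gthr k a c n n').natAbs ≤ n'.natAbs := by
  have := Finset.mem_Icc.1 n.2
  simp only [gthr, fthr]
  omega

lemma fthr_eq_of_natAbs_gthr_eq (n : Vr k a c) (n' : ℤ) (h : (gthr k a c n n').natAbs = n'.natAbs) :
    fthr k a c n n' = n := by
  have := Finset.mem_Icc.1 n.2
  simp only [gthr, fthr] at h ⊢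
  omega

lemma bthr_eq_of_fthr_eq (n : Vr k a c) (n' : ℤ) (h : fthr k a c n n' = n) (hn' : n' ≠ 0) :
    bthr k a c n n' = decide (n' < 0) := by
  have := Finset.mem_Icc.1 n.2
  have := abs_lt_vmax k a c
  have := le_abs_self c
  have := neg_abs_le c
  rw [bthr, h, decide_eq_decide]
  unfold fthr at h
  omega

lemma thrTrans_mem_Tthr (n n' : Vr k a c) (l o o' : Bool) :
    thrTrans k a c n n' l o o' ∈ Tthr k a c :=
  Finset.mem_filter.2 ⟨Finset.mem_univ _, Or.inl ⟨n, n', l, o, o', rfl⟩⟩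

lemma thrTrans_zeroV (n : Vr k a c) (l o o' : Bool) :
    thrTrans k a c n (zeroV k a c) l o o' = ((true, n, o), (l, zeroV k a c, o'),
      (true, n, decide ((n : ℤ) < c)), (false, zeroV k a c, decide ((n : ℤ) < c))) := by
  simp only [thrTrans, fV_zeroV, gV_zeroV, bthr_zeroV]

lemma silentT_or_exists_eq_thrTrans {t : PTrans (Qthr k a c)} (ht : t ∈ Tthr k a c) :
    SilentT t ∨ ∃ n n' l o o', t = thrTrans k a c n n' l o o' := by
  rcases (Finset.mem_filter.1 ht).2 with ht | ⟨p, q, rfl⟩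
  · exact Or.inr ht
  · exact Or.inl rfl

lemma IsFlip.exists_mem_pre {β : Bool} {t : PTrans (Qthr k a c)} (h : IsFlip k a c β t)
    (ℓ : Bool) : ∃ q ∈ pre t, q.1 = ℓ := by
  obtain ⟨n, -, h⟩ := h
  rw [h]
  cases ℓ
  exacts [⟨(false, zeroV k a c, β), by simp, rfl⟩, ⟨(true, n, !β), by simp, rfl⟩]

lemma eq_flip_of_mem_flips {β : Bool} {t : PTrans (Qthr k a c)} (ht : t ∈ flips k a c β) :
    SilentT t ∨ ∃ n : Vr k a c, decide ((n : ℤ) < c) = !β ∧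
      t = thrTrans k a c n (zeroV k a c) false (!β) β := by
  obtain ⟨htT, m, hm, hpre⟩ := Finset.mem_filter.1 ht
  refine (silentT_or_exists_eq_thrTrans htT).imp_right ?_
  rintro ⟨n, n', l, o, o', rfl⟩
  have hZ : (false, zeroV k a c, β) ∈ pre (thrTrans k a c n n' l o o') := by simp [hpre]
  have hL : (true, m, !β) ∈ pre (thrTrans k a c n n' l o o') := by simp [hpre]
  simp only [pre, thrTrans, Multiset.insert_eq_cons, Multiset.mem_cons, Multiset.mem_singleton,
    Prod.mk.injEq] at hZ hL
  obtain ⟨⟨⟩, -⟩ | ⟨rfl, rfl, rfl⟩ := hZ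
  obtain ⟨-, rfl, rfl⟩ | ⟨⟨⟩, -⟩ := hL
  exact ⟨m, hm, rfl⟩

lemma sum_layerWeight_post (β : Bool) (n n' : Vr k a c) (l o o' : Bool) :
    ((post (thrTrans k a c n n' l o o')).map (layerWeight k a c β)).sum =
      2 * (vmax k a c).toNat + 2 + 2 * (gthr k a c n n').natAbs +
        (bthr k a c n n' != expectedOpinion β (gthr k a c n n')).toNat := by
  simp only [post, thrTrans, fV, bthr, gV, Multiset.insert_eq_cons, Multiset.map_cons,
    layerWeight, ↓reduceIte, bne_self_eq_false, Bool.toNat_false, mul_zero, add_zero,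
    Multiset.map_singleton, Bool.false_eq_true, Multiset.sum_cons, Multiset.sum_singleton]
  ring

lemma sum_layerWeight_pre (β : Bool) (n n' : Vr k a c) (l o o' : Bool) :
    ((pre (thrTrans k a c n n' l o o')).map (layerWeight k a c β)).sum =
      2 * (vmax k a c).toNat + 2 + 2 * (o != decide ((n : ℤ) < c)).toNat +
        layerWeight k a c β (l, n', o') := by
  simp [pre, thrTrans, layerWeight]

lemma layerWeight_post_lt_pre_of_fthr_eq {β : Bool} {n n' : Vr k a c} {o o' : Bool}
    (hf : fthr k a c n n' = n) (hflip : ¬IsFlip k a c β (thrTrans k a c n n' false o o'))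
    (hs : ¬SilentT (thrTrans k a c n n' false o o')) :
    ((post (thrTrans k a c n n' false o o')).map (layerWeight k a c β)).sum <
      ((pre (thrTrans k a c n n' false o o')).map (layerWeight k a c β)).sum := by
  have hfV : fV k a c n n' = n := Subtype.ext hf
  have hgV : gV k a c n n' = n' := Subtype.ext (by simp only [gV, gthr, hf]; ring)
  have hb : bthr k a c n n' = decide ((n : ℤ) < c) := by rw [bthr, hf]
  have hns : ¬(o = decide ((n : ℤ) < c) ∧ o' = decide ((n : ℤ) < c)) := by
    rintro ⟨rfl, rfl⟩
    exact hs (by rw [SilentT, pre, post, thrTrans, hfV, hgV, hb])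
  have he : decide ((n : ℤ) < c) = expectedOpinion β n' ∨
      ¬(o = decide ((n : ℤ) < c) ∧ o' = expectedOpinion β n') := by
    by_cases hn' : (n' : ℤ) = 0
    · rw [expectedOpinion, if_pos hn']
      refine or_iff_not_imp_left.2 fun hβ => ?_
      rintro ⟨rfl, rfl⟩
      have hz : n' = zeroV k a c := Subtype.ext hn'
      exact hflip ⟨n, Bool.eq_not_iff.2 hβ, by simp [pre, thrTrans, hz, Bool.eq_not_iff.2 hβ]⟩
    · left
      rw [expectedOpinion, if_neg hn', ← hb]
      exact bthr_eq_of_fthr_eq n n' hf hn'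
  have := toNat_bne_lt _ _ _ _ hns he
  have hg : gthr k a c n n' = n' := congrArg Subtype.val hgV
  rw [sum_layerWeight_post, sum_layerWeight_pre, hg, hb]
  simp only [layerWeight, Bool.false_eq_true, ↓reduceIte]
  omega

lemma layerWeight_post_lt_pre {β : Bool} {t : PTrans (Qthr k a c)} (ht : t ∈ flipFree k a c β)
    (hs : ¬SilentT t) :
    ((post t).map (layerWeight k a c β)).sum < ((pre t).map (layerWeight k a c β)).sum := by
  obtain ⟨htT, hflip⟩ := Finset.mem_filter.1 ht
  obtain hs' | ⟨n, n', l, o, o', rfl⟩ := silentT_or_exists_eq_thrTrans htT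
  · exact absurd hs' hs
  have hg : -vmax k a c ≤ gthr k a c n n' ∧ gthr k a c n n' ≤ vmax k a c :=
    Finset.mem_Icc.1 (gV k a c n n').2
  have := Bool.toNat_le (bthr k a c n n' != expectedOpinion β (gthr k a c n n'))
  cases l
  · rcases (natAbs_gthr_le n n').lt_or_eq with hlt | heq
    · rw [sum_layerWeight_post, sum_layerWeight_pre]
      simp only [layerWeight, Bool.false_eq_true, ↓reduceIte]
      omega
    · exact layerWeight_post_lt_pre_of_fthr_eq (fthr_eq_of_natAbs_gthr_eq n n' heq) hflip hs
  · rw [sum_layerWeight_post, sum_layerWeight_pre]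
    simp only [layerWeight, ↓reduceIte]
    omega

lemma leader_eq_of_terminal {β : Bool} {C : Multiset (Qthr k a c)}
    (hC : Terminal (induced (flipFree k a c β)) C) {n m : Vr k a c} {o p : Bool}
    (hn : (true, n, o) ∈ C) (hm : (true, m, p) ∈ C) :
    ((true, n, o) : Qthr k a c) = (true, m, p) := by
  by_contra hne
  have hle : pre (thrTrans k a c n m true o p) ≤ C :=
    (Multiset.le_iff_subset (by simp [pre, thrTrans, hne])).2
      (by simp [pre, thrTrans, Multiset.insert_eq_cons, Multiset.cons_subset, hn, hm])
  have hmem : thrTrans k a c n m true o p ∈ flipFree k a c β := by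
    refine Finset.mem_filter.2 ⟨thrTrans_mem_Tthr n m true o p, fun hflip => ?_⟩
    obtain ⟨q, hq, hq₁⟩ := hflip.exists_mem_pre false
    simp only [pre, thrTrans, Multiset.insert_eq_cons, Multiset.mem_cons,
      Multiset.mem_singleton] at hq
    rcases hq with rfl | rfl <;> cases hq₁
  have hs : SilentT (thrTrans k a c n m true o p) := hC _ (Finset.mem_union_left _ hmem) hle
  have : (false, gV k a c n m, bthr k a c n m) ∈ pre (thrTrans k a c n m true o p) := by
    rw [hs]
    simp [post, thrTrans]
  simp [pre, thrTrans] at this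

lemma terminal_of_stepBy_flip {β : Bool} {C C' : Multiset (Qthr k a c)}
    {t : PTrans (Qthr k a c)} (hC : Terminal (induced (flipFree k a c β)) C)
    (ht : t ∈ flips k a c β) (hstep : StepBy t C C') :
    Terminal (induced (flipFree k a c β)) C' := by
  rcases eq_flip_of_mem_flips ht with hs | ⟨n, hn, rfl⟩
  · rwa [hstep.eq_of_silentT hs]
  rw [thrTrans_zeroV, hn] at hstep
  have hC' : C' ≤ (false, zeroV k a c, !β) ::ₘ C := hstep.le_cons rfl
  intro u hu hpre
  rcases Finset.mem_union.1 hu with hu | hu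
  swap
  · exact silentT_of_mem_silents hu
  obtain hs | ⟨m, m', l, p, p', rfl⟩ :=
    silentT_or_exists_eq_thrTrans (Finset.mem_filter.1 hu).1
  · exact hs
  by_cases hZ : ((l, m', p') : Qthr k a c) = (false, zeroV k a c, !β)
  · have hmC : (true, m, p) ∈ C := by
      have h := Multiset.mem_of_le (hpre.trans hC') (show ((true, m, p) : Qthr k a c) ∈
        pre (thrTrans k a c m m' l p p') by simp [pre, thrTrans])
      exact (Multiset.mem_cons.1 h).resolve_left (by simp)
    have hLC : (true, n, !β) ∈ C := Multiset.mem_of_le hstep.1 (by simp [pre])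
    obtain ⟨rfl, rfl⟩ : m = n ∧ p = !β := by simpa using leader_eq_of_terminal hC hmC hLC
    simp only [Prod.mk.injEq] at hZ
    obtain ⟨rfl, rfl, rfl⟩ := hZ
    rw [SilentT, thrTrans_zeroV, hn]
    rfl
  · refine hC _ (Finset.mem_union_left _ hu)
      ((Multiset.le_cons_of_notMem ?_).1 (hpre.trans hC'))
    simp [pre, thrTrans, Ne.symm hZ]

lemma terminal_of_reach_flips {β : Bool} {C C' : Multiset (Qthr k a c)}
    (hreach : Reach (induced (flips k a c β)) C C')
    (hC : Terminal (induced (flipFree k a c β)) C) :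
    Terminal (induced (flipFree k a c β)) C' := by
  induction hreach with
  | refl => exact hC
  | tail _ hstep ih =>
    obtain ⟨t, ht, hst⟩ := hstep
    rcases Finset.mem_union.1 ht with ht | ht
    · exact terminal_of_stepBy_flip ih ht hst
    · rwa [hst.eq_of_silentT (silentT_of_mem_silents ht)]

lemma flipWeight_post_lt_pre {β : Bool} {t : PTrans (Qthr k a c)} (ht : t ∈ flips k a c β)
    (hs : ¬SilentT t) :
    ((post t).map (flipWeight k a c β)).sum < ((pre t).map (flipWeight k a c β)).sum := by
  rcases eq_flip_of_mem_flips ht with hs' | ⟨n, hn, rfl⟩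
  · exact absurd hs' hs
  rw [thrTrans_zeroV, hn]
  simp [pre, post, flipWeight]

variable (k a c)

lemma flipFree_nonempty (β : Bool) : (flipFree k a c β).Nonempty := by
  let z : Qthr k a c := (false, zeroV k a c, β)
  refine ⟨(z, z, z, z), Finset.mem_filter.2
    ⟨Finset.mem_filter.2 ⟨Finset.mem_univ _, Or.inr ⟨z, z, rfl⟩⟩, fun hflip => ?_⟩⟩
  obtain ⟨q, hq, hq₁⟩ := hflip.exists_mem_pre true
  simp only [pre, Multiset.insert_eq_cons, Multiset.mem_cons, Multiset.mem_singleton,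
    or_self] at hq
  simp [hq, z] at hq₁

lemma flips_nonempty (β : Bool) : (flips k a c β).Nonempty := by
  obtain ⟨n, hn⟩ := exists_decide_lt_eq k a c (!β)
  exact ⟨thrTrans k a c n (zeroV k a c) false (!β) β,
    Finset.mem_filter.2 ⟨thrTrans_mem_Tthr _ _ _ _ _, n, hn, rfl⟩⟩

theorem layeredWitness_flipFree_flips (β : Bool) :
    LayeredWitness (Pthr k a c) 2 ![flipFree k a c β, flips k a c β] :=
  layeredWitness_two (flipFree_nonempty k a c β) (flips_nonempty k a c β)
    (Finset.disjoint_filter_filter_not _ _ _).symm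
    ((Finset.union_comm _ _).trans (Finset.filter_union_filter_not_eq (IsFlip k a c β) _))
    (fun _ => silentExec_of_weight _ fun _ => layerWeight_post_lt_pre)
    (fun _ => silentExec_of_weight _ fun _ => flipWeight_post_lt_pre)
    (fun _ _ => terminal_of_reach_flips)

end Threshold

end PopProt

open PopProt in
theorem threshold_layeredTermination_general
    (k : ℕ) (a : Fin k → ℤ) (c : ℤ) :
    LayeredTermination (Pthr k a c) ∧
    (0 < c → LayeredWitness (Pthr k a c) 2 ![T1thr k a c, T2thr k a c]) ∧
    (c ≤ 0 → LayeredWitness (Pthr k a c) 2 ![S1thr k a c, S2thr k a c]) := by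
  refine ⟨⟨2, _, layeredWitness_flipFree_flips k a c true⟩, fun _ => ?_, fun _ => ?_⟩
  · rw [T1thr_eq, T2thr_eq]
    exact layeredWitness_flipFree_flips k a c true
  · rw [S1thr_eq, S2thr_eq]
    exact layeredWitness_flipFree_flips k a c false

open PopProt in
/-- Proposition: the threshold protocol `P_thr` satisfies LayeredTermination;
for `c > 0` it is witnessed by the ordered partition `(T₁, T₂)` and for `c ≤ 0`
by the ordered partition `(S₁, S₂)`. -/
theorem threshold_layeredTermination
    (k : ℕ) (a : Fin k → ℤ) (c : ℤ) (hk : 1 ≤ k) :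
    LayeredTermination (Pthr k a c) ∧
    (0 < c → LayeredWitness (Pthr k a c) 2 ![T1thr k a c, T2thr k a c]) ∧
    (c ≤ 0 → LayeredWitness (Pthr k a c) 2 ![S1thr k a c, S2thr k a c]) :=
  threshold_layeredTermination_general k a c
end

section
/- Let P be the conjunction of population protocols P₁ and P₂. For all configurations C, C' of P, every x : S → ℕ, and every i ∈ {1,2}: if C ⇒ₓ C' in P, then πᵢ(C) ⇒_{πᵢ(x)} πᵢ(C') in Pᵢ. -/
namespace PopProt

section Conj

variable {Q₁ Q₂ : Type*} [Fintype Q₁] [DecidableEq Q₁] [Fintype Q₂] [DecidableEq Q₂]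
variable {A : Type*} [Fintype A]

/-- Lift a transition of `P₁` to the product protocol:
`((p, r), (p', r')) ↦ ((q, r), (q', r'))`. -/
def lift1 (t : PTrans Q₁) (r r' : Q₂) : PTrans (Q₁ × Q₂) :=
  ((t.1, r), (t.2.1, r'), (t.2.2.1, r), (t.2.2.2, r'))

/-- Lift a transition of `P₂` to the product protocol:
`((r, p), (r', p')) ↦ ((r, q), (r', q'))`. -/
def lift2 (t : PTrans Q₂) (r r' : Q₁) : PTrans (Q₁ × Q₂) :=
  ((r, t.1), (r', t.2.1), (r, t.2.2.1), (r', t.2.2.2))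

/-- The set `S₁` of transitions of `T₁` lifted to the product. -/
def liftSet1 (T₁ : Finset (PTrans Q₁)) : Finset (PTrans (Q₁ × Q₂)) :=
  (T₁ ×ˢ (Finset.univ : Finset (Q₂ × Q₂))).image fun x => lift1 x.1 x.2.1 x.2.2

/-- The set `S₂` of transitions of `T₂` lifted to the product. -/
def liftSet2 (T₂ : Finset (PTrans Q₂)) : Finset (PTrans (Q₁ × Q₂)) :=
  (T₂ ×ˢ (Finset.univ : Finset (Q₁ × Q₁))).image fun x => lift2 x.1 x.2.1 x.2.2

/-- The conjunction (asynchronous product) of protocols `P₁` and `P₂`. -/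
def conj (P₁ : Protocol Q₁ A) (P₂ : Protocol Q₂ A) : Protocol (Q₁ × Q₂) A where
  T := liftSet1 P₁.T ∪ liftSet2 P₂.T
  total := fun p q => by
    obtain ⟨p', q', h⟩ := P₁.total p.1 q.1
    refine ⟨(p', p.2), (q', q.2), Finset.mem_union_left _ ?_⟩
    refine Finset.mem_image.mpr ⟨((p.1, q.1, p', q'), (p.2, q.2)), ?_, ?_⟩
    · simp [Finset.mem_product, h]
    · simp [lift1]
  inp := fun σ => (P₁.inp σ, P₂.inp σ)
  out := fun q => P₁.out q.1 && P₂.out q.2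

/-- Projection of a configuration of the product onto `Q₁`. -/
def projC1 (C : Multiset (Q₁ × Q₂)) : Multiset Q₁ := C.map Prod.fst

/-- Projection of a configuration of the product onto `Q₂`. -/
def projC2 (C : Multiset (Q₁ × Q₂)) : Multiset Q₂ := C.map Prod.snd

/-- Projection of a transition of the product onto `Q₁`. -/
def projT1 (s : PTrans (Q₁ × Q₂)) : PTrans Q₁ :=
  (s.1.1, s.2.1.1, s.2.2.1.1, s.2.2.2.1)

/-- Projection of a transition of the product onto `Q₂`. -/
def projT2 (s : PTrans (Q₁ × Q₂)) : PTrans Q₂ :=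
  (s.1.2, s.2.1.2, s.2.2.1.2, s.2.2.2.2)

/-- Projection of a vector `x : S → ℕ` onto `T₁`: `π₁(x)(t) = Σ_{s ∈ S₁, π₁(s) = t} x(s)`. -/
def projX1 (T₁ : Finset (PTrans Q₁)) (x : PTrans (Q₁ × Q₂) → ℕ) : PTrans Q₁ → ℕ :=
  fun t => ∑ s ∈ (liftSet1 (Q₂ := Q₂) T₁).filter (fun s => projT1 s = t), x s

/-- Projection of a vector `x : S → ℕ` onto `T₂`: `π₂(x)(t) = Σ_{s ∈ S₂, π₂(s) = t} x(s)`. -/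
def projX2 (T₂ : Finset (PTrans Q₂)) (x : PTrans (Q₁ × Q₂) → ℕ) : PTrans Q₂ → ℕ :=
  fun t => ∑ s ∈ (liftSet2 (Q₁ := Q₁) T₂).filter (fun s => projT2 s = t), x s

end Conj

end PopProt

namespace PopProt

section ProjAux

set_option linter.unusedSectionVars false

variable {B Q' : Type*} [Fintype B] [DecidableEq B] [Fintype Q'] [DecidableEq Q']

/-- Componentwise projection of a transition along `f`. -/
def pmap (f : B → Q') (s : PTrans B) : PTrans Q' :=
  (f s.1, f s.2.1, f s.2.2.1, f s.2.2.2)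

lemma pre_pmap (f : B → Q') (s : PTrans B) : pre (pmap f s) = (pre s).map f := by
  simp [pre, pmap]

lemma post_pmap (f : B → Q') (s : PTrans B) : post (pmap f s) = (post s).map f := by
  simp [post, pmap]

lemma count_map_fiber (f : B → Q') (M : Multiset B) (q : Q') :
    (M.map f).count q = ∑ b : B, if f b = q then M.count b else 0 := by
  induction M using Multiset.induction_on with
  | empty => simp
  | cons a s ih =>
    have key : ∀ b : B, (if f b = q then (a ::ₘ s).count b else 0)
        = (if f b = q then s.count b else 0)
          + (if b = a then (if f b = q then 1 else 0) else 0) := by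
      intro b
      by_cases h1 : f b = q <;> by_cases h2 : b = a <;> simp_all [Multiset.count_cons]
    rw [Finset.sum_congr rfl fun b _ => key b, Finset.sum_add_distrib,
      Finset.sum_ite_eq' Finset.univ a]
    simp [Multiset.count_cons, ih, eq_comm]

lemma count_map_fiber_int (f : B → Q') (M : Multiset B) (q : Q') :
    ((M.map f).count q : ℤ) = ∑ b : B, if f b = q then (M.count b : ℤ) else 0 := by
  rw [count_map_fiber]
  push_cast
  exact Finset.sum_congr rfl fun b _ => by split <;> simp

lemma potReach_proj (f : B → Q') (T S₁ : Finset (PTrans B)) (T' : Finset (PTrans Q'))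
    (hsub : S₁ ⊆ T)
    (hsil : ∀ s ∈ T, s ∉ S₁ → pre (pmap f s) = post (pmap f s))
    (hmem : ∀ s ∈ S₁, pmap f s ∈ T')
    {C C' : Multiset B} {x : PTrans B → ℕ}
    (h : PotReach T C C' x) :
    PotReach T' (C.map f) (C'.map f)
      (fun t => ∑ s ∈ S₁.filter (fun s => pmap f s = t), x s) := by
  obtain ⟨hflow, htrap, hsiph⟩ := h
  set x' : PTrans Q' → ℕ := fun t => ∑ s ∈ S₁.filter (fun s => pmap f s = t), x s with hx'
  have hxle : ∀ s ∈ S₁, x s ≤ x' (pmap f s) := by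
    intro s hs
    exact Finset.single_le_sum (fun i _ => Nat.zero_le _)
      (Finset.mem_filter.mpr ⟨hs, rfl⟩)
  have hx'ne : ∀ t, x' t ≠ 0 → ∃ s ∈ S₁, pmap f s = t ∧ x s ≠ 0 := by
    intro t ht
    obtain ⟨s, hs, hxs⟩ := Finset.exists_ne_zero_of_sum_ne_zero ht
    exact ⟨s, (Finset.mem_filter.mp hs).1, (Finset.mem_filter.mp hs).2, hxs⟩
  refine ⟨?_, ?_, ?_⟩
  · -- Flow equations
    intro q
    have hd : ∀ s : PTrans B,
        (∑ b : B, if f b = q then (((post s).count b : ℤ) - ((pre s).count b : ℤ)) else 0)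
        = ((post (pmap f s)).count q : ℤ) - ((pre (pmap f s)).count q : ℤ) := by
      intro s
      rw [post_pmap, pre_pmap, count_map_fiber_int, count_map_fiber_int,
        ← Finset.sum_sub_distrib]
      exact Finset.sum_congr rfl fun b _ => by split <;> simp
    have swap : (∑ b : B, if f b = q then
          (∑ s ∈ T, (x s : ℤ) * (((post s).count b : ℤ) - ((pre s).count b : ℤ))) else 0)
        = ∑ s ∈ T, (x s : ℤ) *
            (((post (pmap f s)).count q : ℤ) - ((pre (pmap f s)).count q : ℤ)) := by
      have e1 : (∑ b : B, if f b = q then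
            (∑ s ∈ T, (x s : ℤ) * (((post s).count b : ℤ) - ((pre s).count b : ℤ))) else 0)
          = ∑ b : B, ∑ s ∈ T,
              (if f b = q then (x s : ℤ) * (((post s).count b : ℤ) - ((pre s).count b : ℤ))
               else 0) := by
        refine Finset.sum_congr rfl fun b _ => ?_
        split <;> simp
      rw [e1, Finset.sum_comm]
      refine Finset.sum_congr rfl fun s _ => ?_
      rw [← hd s, Finset.mul_sum]
      exact Finset.sum_congr rfl fun b _ => by split <;> simp
    have hsplit : (∑ s ∈ T, (x s : ℤ) *
          (((post (pmap f s)).count q : ℤ) - ((pre (pmap f s)).count q : ℤ)))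
        = ∑ t ∈ T', (x' t : ℤ) * (((post t).count q : ℤ) - ((pre t).count q : ℤ)) := by
      rw [← Finset.sum_sdiff hsub]
      have hz : (∑ s ∈ T \ S₁, (x s : ℤ) *
            (((post (pmap f s)).count q : ℤ) - ((pre (pmap f s)).count q : ℤ))) = 0 := by
        refine Finset.sum_eq_zero fun s hs => ?_
        have := hsil s (Finset.mem_sdiff.mp hs).1 (Finset.mem_sdiff.mp hs).2
        rw [← this]
        ring
      rw [hz, zero_add]
      rw [← Finset.sum_fiberwise_of_maps_to hmem
        (fun s => (x s : ℤ) * (((post (pmap f s)).count q : ℤ) - ((pre (pmap f s)).count q : ℤ)))]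
      refine Finset.sum_congr rfl fun t _ => ?_
      have e2 : (∑ s ∈ S₁.filter (fun s => pmap f s = t), (x s : ℤ) *
            (((post (pmap f s)).count q : ℤ) - ((pre (pmap f s)).count q : ℤ)))
          = ∑ s ∈ S₁.filter (fun s => pmap f s = t), (x s : ℤ) *
            (((post t).count q : ℤ) - ((pre t).count q : ℤ)) := by
        refine Finset.sum_congr rfl fun s hs => ?_
        rw [(Finset.mem_filter.mp hs).2]
      rw [e2, ← Finset.sum_mul]
      congr 1
      rw [hx']
      push_cast
      rfl
    rw [count_map_fiber_int, count_map_fiber_int,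
      Finset.sum_congr rfl (fun b _ => show (if f b = q then ((C'.count b : ℤ)) else 0)
        = (if f b = q then ((C.count b : ℤ)) else 0)
          + (if f b = q then (∑ s ∈ T, (x s : ℤ) *
              (((post s).count b : ℤ) - ((pre s).count b : ℤ))) else 0) from by
        by_cases hb : f b = q <;> simp [hb, hflow b]),
      Finset.sum_add_distrib, swap, hsplit]
  · -- Trap condition
    intro R' hR'trap hR'C'
    set R : Finset B := Finset.univ.filter (fun b => f b ∈ R') with hRdef
    have hmemR : ∀ b, b ∈ R ↔ f b ∈ R' := fun b => by simp [hRdef]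
    have htrapR : IsTrap T (suppIn T x) R := by
      intro s hs
      rw [Finset.mem_inter] at hs
      obtain ⟨hs1, hs2⟩ := hs
      rw [postSetOf, Finset.mem_filter] at hs1
      obtain ⟨hsT, u, huR, hupre⟩ := hs1
      rw [suppIn, Finset.mem_filter] at hs2
      rw [preSetOf, Finset.mem_filter]
      refine ⟨hsT, ?_⟩
      by_cases hsS : s ∈ S₁
      · have ht' : pmap f s ∈ postSetOf T' R' ∩ suppIn T' x' := by
          rw [Finset.mem_inter, postSetOf, Finset.mem_filter, suppIn, Finset.mem_filter]
          refine ⟨⟨hmem s hsS, f u, (hmemR u).mp huR, ?_⟩, hmem s hsS, ?_⟩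
          · rw [pre_pmap]; exact Multiset.mem_map_of_mem f hupre
          · intro h0
            exact hs2.2 (Nat.le_zero.mp (h0 ▸ hxle s hsS))
        have hpre' := hR'trap ht'
        rw [preSetOf, Finset.mem_filter] at hpre'
        obtain ⟨-, q, hqR', hqpost⟩ := hpre'
        rw [post_pmap] at hqpost
        obtain ⟨v, hv, rfl⟩ := Multiset.mem_map.mp hqpost
        exact ⟨v, (hmemR v).mpr hqR', hv⟩
      · have heq := hsil s hsT hsS
        have hf : f u ∈ post (pmap f s) := by
          rw [← heq, pre_pmap]; exact Multiset.mem_map_of_mem f hupre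
        rw [post_pmap] at hf
        obtain ⟨v, hv, hfv⟩ := Multiset.mem_map.mp hf
        exact ⟨v, (hmemR v).mpr (hfv ▸ (hmemR u).mp huR), hv⟩
    have hRC' : ∀ b ∈ R, b ∉ C' := fun b hb hbC' =>
      hR'C' (f b) ((hmemR b).mp hb) (Multiset.mem_map_of_mem f hbC')
    have hE := htrap R htrapR hRC'
    rw [Finset.eq_empty_iff_forall_notMem]
    intro t ht
    rw [Finset.mem_inter, preSetOf, Finset.mem_filter, suppIn, Finset.mem_filter] at ht
    obtain ⟨⟨htT', q, hqR', hqpost⟩, -, hxt⟩ := ht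
    obtain ⟨s, hsS, hps, hxs⟩ := hx'ne t hxt
    have hsinter : s ∈ preSetOf T R ∩ suppIn T x := by
      rw [Finset.mem_inter, preSetOf, Finset.mem_filter, suppIn, Finset.mem_filter]
      have hq : q ∈ post (pmap f s) := hps ▸ hqpost
      rw [post_pmap] at hq
      obtain ⟨v, hv, rfl⟩ := Multiset.mem_map.mp hq
      exact ⟨⟨hsub hsS, v, (hmemR v).mpr hqR', hv⟩, hsub hsS, hxs⟩
    rw [hE] at hsinter
    exact absurd hsinter (Finset.notMem_empty s)
  · -- Siphon condition
    intro R' hR'siph hR'C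
    set R : Finset B := Finset.univ.filter (fun b => f b ∈ R') with hRdef
    have hmemR : ∀ b, b ∈ R ↔ f b ∈ R' := fun b => by simp [hRdef]
    have hsiphR : IsSiphon T (suppIn T x) R := by
      intro s hs
      rw [Finset.mem_inter] at hs
      obtain ⟨hs1, hs2⟩ := hs
      rw [preSetOf, Finset.mem_filter] at hs1
      obtain ⟨hsT, u, huR, hupost⟩ := hs1
      rw [suppIn, Finset.mem_filter] at hs2
      rw [postSetOf, Finset.mem_filter]
      refine ⟨hsT, ?_⟩
      by_cases hsS : s ∈ S₁
      · have ht' : pmap f s ∈ preSetOf T' R' ∩ suppIn T' x' := by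
          rw [Finset.mem_inter, preSetOf, Finset.mem_filter, suppIn, Finset.mem_filter]
          refine ⟨⟨hmem s hsS, f u, (hmemR u).mp huR, ?_⟩, hmem s hsS, ?_⟩
          · rw [post_pmap]; exact Multiset.mem_map_of_mem f hupost
          · intro h0
            exact hs2.2 (Nat.le_zero.mp (h0 ▸ hxle s hsS))
        have hpost' := hR'siph ht'
        rw [postSetOf, Finset.mem_filter] at hpost'
        obtain ⟨-, q, hqR', hqpre⟩ := hpost'
        rw [pre_pmap] at hqpre
        obtain ⟨v, hv, rfl⟩ := Multiset.mem_map.mp hqpre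
        exact ⟨v, (hmemR v).mpr hqR', hv⟩
      · have heq := hsil s hsT hsS
        have hf : f u ∈ pre (pmap f s) := by
          rw [heq, post_pmap]; exact Multiset.mem_map_of_mem f hupost
        rw [pre_pmap] at hf
        obtain ⟨v, hv, hfv⟩ := Multiset.mem_map.mp hf
        exact ⟨v, (hmemR v).mpr (hfv ▸ (hmemR u).mp huR), hv⟩
    have hRC : ∀ b ∈ R, b ∉ C := fun b hb hbC =>
      hR'C (f b) ((hmemR b).mp hb) (Multiset.mem_map_of_mem f hbC)
    have hE := hsiph R hsiphR hRC
    rw [Finset.eq_empty_iff_forall_notMem]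
    intro t ht
    rw [Finset.mem_inter, postSetOf, Finset.mem_filter, suppIn, Finset.mem_filter] at ht
    obtain ⟨⟨htT', q, hqR', hqpre⟩, -, hxt⟩ := ht
    obtain ⟨s, hsS, hps, hxs⟩ := hx'ne t hxt
    have hsinter : s ∈ postSetOf T R ∩ suppIn T x := by
      rw [Finset.mem_inter, postSetOf, Finset.mem_filter, suppIn, Finset.mem_filter]
      have hq : q ∈ pre (pmap f s) := hps ▸ hqpre
      rw [pre_pmap] at hq
      obtain ⟨v, hv, rfl⟩ := Multiset.mem_map.mp hq
      exact ⟨⟨hsub hsS, v, (hmemR v).mpr hqR', hv⟩, hsub hsS, hxs⟩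
    rw [hE] at hsinter
    exact absurd hsinter (Finset.notMem_empty s)

end ProjAux

end PopProt

open PopProt in
/-- Potential reachability in the conjunction protocol projects to potential
reachability in each component protocol: if `C ⇒ₓ C'` in `P`, then
`πᵢ(C) ⇒_{πᵢ(x)} πᵢ(C')` in `Pᵢ`. -/
theorem conj_potReach_projects
    {Q₁ Q₂ A : Type*} [Fintype Q₁] [DecidableEq Q₁] [Nonempty Q₁]
    [Fintype Q₂] [DecidableEq Q₂] [Nonempty Q₂] [Fintype A] [Nonempty A]
    (P₁ : Protocol Q₁ A) (P₂ : Protocol Q₂ A)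
    (C C' : Multiset (Q₁ × Q₂)) (hC : 2 ≤ Multiset.card C) (hC' : 2 ≤ Multiset.card C')
    (x : PTrans (Q₁ × Q₂) → ℕ) (h : PotReach (conj P₁ P₂).T C C' x) :
    PotReach P₁.T (projC1 C) (projC1 C') (projX1 P₁.T x) ∧
    PotReach P₂.T (projC2 C) (projC2 C') (projX2 P₂.T x) := by
  constructor
  · exact potReach_proj Prod.fst (liftSet1 P₁.T ∪ liftSet2 P₂.T) (liftSet1 P₁.T) P₁.T
      Finset.subset_union_left
      (fun s hsT hs1 => by
        rcases Finset.mem_union.mp hsT with h1 | h2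
        · exact absurd h1 hs1
        · obtain ⟨⟨t, w⟩, -, rfl⟩ := Finset.mem_image.mp h2
          simp [lift2, pmap, pre, post])
      (fun s hs => by
        obtain ⟨⟨t, w⟩, hmem, rfl⟩ := Finset.mem_image.mp hs
        exact (Finset.mem_product.mp hmem).1)
      h
  · exact potReach_proj Prod.snd (liftSet1 P₁.T ∪ liftSet2 P₂.T) (liftSet2 P₂.T) P₂.T
      Finset.subset_union_right
      (fun s hsT hs2 => by
        rcases Finset.mem_union.mp hsT with h1 | h2
        · obtain ⟨⟨t, w⟩, -, rfl⟩ := Finset.mem_image.mp h1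
          simp [lift1, pmap, pre, post]
        · exact absurd h2 hs2)
      (fun s hs => by
        obtain ⟨⟨t, w⟩, hmem, rfl⟩ := Finset.mem_image.mp hs
        exact (Finset.mem_product.mp hmem).1)
      h
end

section
/- Let P be the conjunction of population protocols P₁ and P₂. If P₁ and P₂ both satisfy StrongConsensus, then P satisfies StrongConsensus. -/
namespace PopProt

section ConjProof

set_option linter.unusedSectionVars false
variable {Q₁ Q₂ : Type*} [Fintype Q₁] [DecidableEq Q₁] [Fintype Q₂] [DecidableEq Q₂]

lemma mem_liftSet1_iff {T₁ : Finset (PTrans Q₁)} {s : PTrans (Q₁ × Q₂)} :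
    s ∈ liftSet1 (Q₂ := Q₂) T₁ ↔ ∃ t ∈ T₁, ∃ r r' : Q₂, s = lift1 t r r' := by
  constructor
  · intro hs
    obtain ⟨⟨t, r, r'⟩, hm, rfl⟩ := Finset.mem_image.mp hs
    exact ⟨t, (Finset.mem_product.mp hm).1, r, r', rfl⟩
  · rintro ⟨t, ht, r, r', rfl⟩
    exact Finset.mem_image.mpr ⟨⟨t, r, r'⟩, Finset.mem_product.mpr ⟨ht, Finset.mem_univ _⟩, rfl⟩

lemma mem_liftSet2_iff {T₂ : Finset (PTrans Q₂)} {s : PTrans (Q₁ × Q₂)} :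
    s ∈ liftSet2 (Q₁ := Q₁) T₂ ↔ ∃ t ∈ T₂, ∃ r r' : Q₁, s = lift2 t r r' := by
  constructor
  · intro hs
    obtain ⟨⟨t, r, r'⟩, hm, rfl⟩ := Finset.mem_image.mp hs
    exact ⟨t, (Finset.mem_product.mp hm).1, r, r', rfl⟩
  · rintro ⟨t, ht, r, r', rfl⟩
    exact Finset.mem_image.mpr ⟨⟨t, r, r'⟩, Finset.mem_product.mpr ⟨ht, Finset.mem_univ _⟩, rfl⟩

lemma projT1_lift1 (t : PTrans Q₁) (r r' : Q₂) : projT1 (lift1 t r r') = t := rfl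

lemma projT2_lift2 (t : PTrans Q₂) (r r' : Q₁) : projT2 (lift2 t r r') = t := rfl

lemma projT1_lift2 (t : PTrans Q₂) (r r' : Q₁) :
    projT1 (lift2 t r r') = (r, r', r, r') := rfl

lemma projT2_lift1 (t : PTrans Q₁) (r r' : Q₂) :
    projT2 (lift1 t r r') = (r, r', r, r') := rfl

lemma projC1_pre (s : PTrans (Q₁ × Q₂)) : projC1 (pre s) = pre (projT1 s) := by
  simp [projC1, pre, projT1]

lemma projC1_post (s : PTrans (Q₁ × Q₂)) : projC1 (post s) = post (projT1 s) := by
  simp [projC1, post, projT1]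

lemma projC2_pre (s : PTrans (Q₁ × Q₂)) : projC2 (pre s) = pre (projT2 s) := by
  simp [projC2, pre, projT2]

lemma projC2_post (s : PTrans (Q₁ × Q₂)) : projC2 (post s) = post (projT2 s) := by
  simp [projC2, post, projT2]

lemma count_fst (C : Multiset (Q₁ × Q₂)) (q₁ : Q₁) :
    (projC1 C).count q₁ = ∑ q₂ : Q₂, C.count (q₁, q₂) := by
  induction C using Multiset.induction with
  | empty => simp [projC1]
  | cons a C ih =>
    simp only [projC1, Multiset.map_cons, Multiset.count_cons] at *
    rw [ih, Finset.sum_add_distrib]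
    congr 1
    by_cases h : q₁ = a.1
    · subst h
      rw [if_pos rfl]
      have : ∀ q₂ : Q₂, ((a.1, q₂) = a) ↔ (q₂ = a.2) := by
        intro q₂; constructor
        · intro h'; exact congrArg Prod.snd h'
        · intro h'; subst h'; rfl
      simp [this]
    · rw [if_neg h]
      have : ∀ q₂ : Q₂, ¬ ((q₁, q₂) = a) := by
        intro q₂ h'; exact h (congrArg Prod.fst h')
      simp [this]

lemma count_snd (C : Multiset (Q₁ × Q₂)) (q₂ : Q₂) :
    (projC2 C).count q₂ = ∑ q₁ : Q₁, C.count (q₁, q₂) := by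
  induction C using Multiset.induction with
  | empty => simp [projC2]
  | cons a C ih =>
    simp only [projC2, Multiset.map_cons, Multiset.count_cons] at *
    rw [ih, Finset.sum_add_distrib]
    congr 1
    by_cases h : q₂ = a.2
    · subst h
      rw [if_pos rfl]
      have : ∀ q₁ : Q₁, ((q₁, a.2) = a) ↔ (q₁ = a.1) := by
        intro q₁; constructor
        · intro h'; exact congrArg Prod.fst h'
        · intro h'; subst h'; rfl
      simp [this]
    · rw [if_neg h]
      have : ∀ q₁ : Q₁, ¬ ((q₁, q₂) = a) := by
        intro q₁ h'; exact h (congrArg Prod.snd h')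
      simp [this]

end ConjProof

end PopProt
namespace PopProt
section ConjProof2
set_option linter.unusedSectionVars false
variable {Q₁ Q₂ : Type*} [Fintype Q₁] [DecidableEq Q₁] [Fintype Q₂] [DecidableEq Q₂]

lemma mem_preSetOf {T : Finset (PTrans Q₁)} {R : Finset Q₁} {t : PTrans Q₁} :
    t ∈ preSetOf T R ↔ t ∈ T ∧ ∃ q ∈ R, q ∈ post t := Finset.mem_filter

lemma mem_postSetOf {T : Finset (PTrans Q₁)} {R : Finset Q₁} {t : PTrans Q₁} :
    t ∈ postSetOf T R ↔ t ∈ T ∧ ∃ q ∈ R, q ∈ pre t := Finset.mem_filter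

lemma mem_suppIn {T : Finset (PTrans Q₁)} {x : PTrans Q₁ → ℕ} {t : PTrans Q₁} :
    t ∈ suppIn T x ↔ t ∈ T ∧ x t ≠ 0 := Finset.mem_filter

lemma mem_pre_iff {q : Q₁} {t : PTrans Q₁} : q ∈ pre t ↔ q = t.1 ∨ q = t.2.1 := by
  simp [pre]

lemma mem_post_iff {q : Q₁} {t : PTrans Q₁} : q ∈ post t ↔ q = t.2.2.1 ∨ q = t.2.2.2 := by
  simp [post]

lemma key1 {q₁ : Q₁} (D : Multiset (Q₁ × Q₂)) :
    ((projC1 D).count q₁ : ℤ) = ∑ q₂ : Q₂, (D.count (q₁, q₂) : ℤ) := by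
  rw [count_fst]; push_cast; ring

lemma flowEq_proj1 (T₁ : Finset (PTrans Q₁)) (T₂ : Finset (PTrans Q₂))
    {C C' : Multiset (Q₁ × Q₂)} {x : PTrans (Q₁ × Q₂) → ℕ}
    (h : FlowEq (liftSet1 T₁ ∪ liftSet2 T₂) C C' x) :
    FlowEq T₁ (projC1 C) (projC1 C') (projX1 T₁ x) := by
  intro q₁
  set T : Finset (PTrans (Q₁ × Q₂)) := liftSet1 T₁ ∪ liftSet2 T₂ with hT
  have claimA : ∀ s : PTrans (Q₁ × Q₂),
      ∑ q₂ : Q₂, ((x s : ℤ) * (((post s).count (q₁, q₂) : ℤ) - ((pre s).count (q₁, q₂) : ℤ)))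
        = (x s : ℤ) * (((post (projT1 s)).count q₁ : ℤ) - ((pre (projT1 s)).count q₁ : ℤ)) := by
    intro s
    rw [← Finset.mul_sum, Finset.sum_sub_distrib, ← key1, ← key1, projC1_pre, projC1_post]
  have claimB : ∑ s ∈ T, (x s : ℤ) *
        (((post (projT1 s)).count q₁ : ℤ) - ((pre (projT1 s)).count q₁ : ℤ))
      = ∑ t ∈ T₁, (projX1 T₁ x t : ℤ) *
        (((post t).count q₁ : ℤ) - ((pre t).count q₁ : ℤ)) := by
    have hz : ∀ s ∈ liftSet2 T₂ \ liftSet1 T₁, (x s : ℤ) *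
        (((post (projT1 s)).count q₁ : ℤ) - ((pre (projT1 s)).count q₁ : ℤ)) = 0 := by
      intro s hs
      obtain ⟨t, ht, r, r', rfl⟩ := mem_liftSet2_iff.mp (Finset.mem_sdiff.mp hs).1
      rw [projT1_lift2]
      simp [pre, post]
    have hmaps : ∀ s ∈ liftSet1 (Q₂ := Q₂) T₁, projT1 s ∈ T₁ := by
      intro s hs
      obtain ⟨t, ht, r, r', rfl⟩ := mem_liftSet1_iff.mp hs
      rw [projT1_lift1]; exact ht
    rw [hT, ← Finset.union_sdiff_self_eq_union, Finset.sum_union Finset.disjoint_sdiff,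
      Finset.sum_eq_zero hz, add_zero,
      ← Finset.sum_fiberwise_of_maps_to hmaps
        (fun s => (x s : ℤ) * (((post (projT1 s)).count q₁ : ℤ) - ((pre (projT1 s)).count q₁ : ℤ)))]
    refine Finset.sum_congr rfl fun t _ => ?_
    have : ∀ s ∈ (liftSet1 (Q₂ := Q₂) T₁).filter (fun s => projT1 s = t),
        (x s : ℤ) * (((post (projT1 s)).count q₁ : ℤ) - ((pre (projT1 s)).count q₁ : ℤ))
          = (x s : ℤ) * (((post t).count q₁ : ℤ) - ((pre t).count q₁ : ℤ)) := by
      intro s hs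
      rw [(Finset.mem_filter.mp hs).2]
    rw [Finset.sum_congr rfl this, ← Finset.sum_mul, projX1]
    push_cast
    ring
  calc ((projC1 C').count q₁ : ℤ)
      = ∑ q₂ : Q₂, (C'.count (q₁, q₂) : ℤ) := key1 C'
    _ = ∑ q₂ : Q₂, ((C.count (q₁, q₂) : ℤ) + ∑ s ∈ T, (x s : ℤ) *
          (((post s).count (q₁, q₂) : ℤ) - ((pre s).count (q₁, q₂) : ℤ))) :=
        Finset.sum_congr rfl fun q₂ _ => h (q₁, q₂)
    _ = (∑ q₂ : Q₂, (C.count (q₁, q₂) : ℤ)) + ∑ s ∈ T, ∑ q₂ : Q₂, (x s : ℤ) *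
          (((post s).count (q₁, q₂) : ℤ) - ((pre s).count (q₁, q₂) : ℤ)) := by
        rw [Finset.sum_add_distrib, Finset.sum_comm]
    _ = ((projC1 C).count q₁ : ℤ) + ∑ t ∈ T₁, (projX1 T₁ x t : ℤ) *
          (((post t).count q₁ : ℤ) - ((pre t).count q₁ : ℤ)) := by
        rw [← key1, Finset.sum_congr rfl (fun s _ => claimA s), claimB]

end ConjProof2
end PopProt
namespace PopProt
section ConjProof3
set_option linter.unusedSectionVars false
variable {Q₁ Q₂ : Type*} [Fintype Q₁] [DecidableEq Q₁] [Fintype Q₂] [DecidableEq Q₂]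

lemma suppIn_of_lift1 {T₁ : Finset (PTrans Q₁)} {x : PTrans (Q₁ × Q₂) → ℕ}
    {s : PTrans (Q₁ × Q₂)} (hs : s ∈ liftSet1 (Q₂ := Q₂) T₁) (hx : x s ≠ 0) :
    projT1 s ∈ suppIn T₁ (projX1 T₁ x) := by
  obtain ⟨t, ht, r, r', rfl⟩ := mem_liftSet1_iff.mp hs
  rw [projT1_lift1]
  refine mem_suppIn.mpr ⟨ht, fun h0 => hx ?_⟩
  simp only [projX1] at h0
  exact Finset.sum_eq_zero_iff.mp h0 (lift1 t r r')
    (Finset.mem_filter.mpr ⟨hs, projT1_lift1 t r r'⟩)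

lemma exists_lift1_of_suppIn {T₁ : Finset (PTrans Q₁)} {x : PTrans (Q₁ × Q₂) → ℕ}
    {t : PTrans Q₁} (ht : t ∈ suppIn T₁ (projX1 (Q₂ := Q₂) T₁ x)) :
    ∃ r r' : Q₂, lift1 t r r' ∈ liftSet1 (Q₂ := Q₂) T₁ ∧ x (lift1 t r r') ≠ 0 := by
  obtain ⟨ht1, hx⟩ := mem_suppIn.mp ht
  simp only [projX1] at hx
  obtain ⟨s, hsmem, hxs⟩ := Finset.exists_ne_zero_of_sum_ne_zero hx
  obtain ⟨hs1, hps⟩ := Finset.mem_filter.mp hsmem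
  obtain ⟨t₀, ht₀, r, r', rfl⟩ := mem_liftSet1_iff.mp hs1
  rw [projT1_lift1] at hps
  subst hps
  exact ⟨r, r', hs1, hxs⟩

lemma trapCond_proj1 (T₁ : Finset (PTrans Q₁)) (T₂ : Finset (PTrans Q₂))
    {C' : Multiset (Q₁ × Q₂)} {x : PTrans (Q₁ × Q₂) → ℕ}
    (h : ∀ R : Finset (Q₁ × Q₂),
      IsTrap (liftSet1 T₁ ∪ liftSet2 T₂) (suppIn (liftSet1 T₁ ∪ liftSet2 T₂) x) R →
      (∀ q ∈ R, q ∉ C') →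
      preSetOf (liftSet1 T₁ ∪ liftSet2 T₂) R ∩ suppIn (liftSet1 T₁ ∪ liftSet2 T₂) x = ∅) :
    ∀ R : Finset Q₁, IsTrap T₁ (suppIn T₁ (projX1 T₁ x)) R → (∀ q ∈ R, q ∉ projC1 C') →
      preSetOf T₁ R ∩ suppIn T₁ (projX1 T₁ x) = ∅ := by
  intro R hRtrap hRC'
  set T : Finset (PTrans (Q₁ × Q₂)) := liftSet1 T₁ ∪ liftSet2 T₂ with hT
  set Rh : Finset (Q₁ × Q₂) := R ×ˢ Finset.univ with hRh
  have memRh : ∀ q : Q₁ × Q₂, q ∈ Rh ↔ q.1 ∈ R := by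
    intro q; simp [hRh, Finset.mem_product]
  have hRhtrap : IsTrap T (suppIn T x) Rh := by
    intro s hs
    obtain ⟨hpost, hsupp⟩ := Finset.mem_inter.mp hs
    obtain ⟨hsT, q, hqRh, hqpre⟩ := mem_postSetOf.mp hpost
    by_cases h2 : s ∈ liftSet2 (Q₁ := Q₁) T₂
    · obtain ⟨u, hu, r, r', rfl⟩ := mem_liftSet2_iff.mp h2
      rcases mem_pre_iff.mp hqpre with rfl | rfl
      · exact mem_preSetOf.mpr ⟨hsT, (r, u.2.2.1), (memRh (r, u.2.2.1)).mpr ((memRh ((lift2 u r r').1)).mp hqRh),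
          mem_post_iff.mpr (Or.inl rfl)⟩
      · exact mem_preSetOf.mpr ⟨hsT, (r', u.2.2.2), (memRh (r', u.2.2.2)).mpr ((memRh ((lift2 u r r').2.1)).mp hqRh),
          mem_post_iff.mpr (Or.inr rfl)⟩
    · have h1 : s ∈ liftSet1 (Q₂ := Q₂) T₁ := by
        rcases Finset.mem_union.mp hsT with h' | h'
        · exact h'
        · exact absurd h' h2
      obtain ⟨t, ht, r, r', rfl⟩ := mem_liftSet1_iff.mp h1
      have hxs : x (lift1 t r r') ≠ 0 := (mem_suppIn.mp hsupp).2
      have htsupp : t ∈ suppIn T₁ (projX1 T₁ x) := by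
        have := suppIn_of_lift1 h1 hxs
        rwa [projT1_lift1] at this
      have htpost : t ∈ postSetOf T₁ R := by
        refine mem_postSetOf.mpr ⟨ht, ?_⟩
        rcases mem_pre_iff.mp hqpre with rfl | rfl
        · exact ⟨t.1, (memRh _).mp hqRh, mem_pre_iff.mpr (Or.inl rfl)⟩
        · exact ⟨t.2.1, (memRh _).mp hqRh, mem_pre_iff.mpr (Or.inr rfl)⟩
      obtain ⟨-, q₁, hq₁R, hq₁post⟩ :=
        mem_preSetOf.mp (hRtrap (Finset.mem_inter.mpr ⟨htpost, htsupp⟩))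
      rcases mem_post_iff.mp hq₁post with rfl | rfl
      · exact mem_preSetOf.mpr ⟨hsT, (t.2.2.1, r), (memRh _).mpr hq₁R,
          mem_post_iff.mpr (Or.inl rfl)⟩
      · exact mem_preSetOf.mpr ⟨hsT, (t.2.2.2, r'), (memRh _).mpr hq₁R,
          mem_post_iff.mpr (Or.inr rfl)⟩
  have hnone : ∀ q ∈ Rh, q ∉ C' := by
    intro q hq hmem
    exact hRC' q.1 ((memRh q).mp hq) (Multiset.mem_map_of_mem Prod.fst hmem)
  have hempty := h Rh hRhtrap hnone
  rw [Finset.eq_empty_iff_forall_notMem] at hempty ⊢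
  intro t htmem
  obtain ⟨htpre, htsupp⟩ := Finset.mem_inter.mp htmem
  obtain ⟨ht1, q₁, hq₁R, hq₁post⟩ := mem_preSetOf.mp htpre
  obtain ⟨r, r', hsmem, hxs⟩ := exists_lift1_of_suppIn htsupp
  have hsT : lift1 t r r' ∈ T := Finset.mem_union_left _ hsmem
  refine hempty (lift1 t r r') (Finset.mem_inter.mpr ⟨?_, mem_suppIn.mpr ⟨hsT, hxs⟩⟩)
  rcases mem_post_iff.mp hq₁post with rfl | rfl
  · exact mem_preSetOf.mpr ⟨hsT, (t.2.2.1, r), (memRh _).mpr hq₁R,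
      mem_post_iff.mpr (Or.inl rfl)⟩
  · exact mem_preSetOf.mpr ⟨hsT, (t.2.2.2, r'), (memRh _).mpr hq₁R,
      mem_post_iff.mpr (Or.inr rfl)⟩

end ConjProof3
end PopProt
namespace PopProt
section ConjProof4
set_option linter.unusedSectionVars false
variable {Q₁ Q₂ : Type*} [Fintype Q₁] [DecidableEq Q₁] [Fintype Q₂] [DecidableEq Q₂]

lemma siphonCond_proj1 (T₁ : Finset (PTrans Q₁)) (T₂ : Finset (PTrans Q₂))
    {C : Multiset (Q₁ × Q₂)} {x : PTrans (Q₁ × Q₂) → ℕ}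
    (h : ∀ R : Finset (Q₁ × Q₂),
      IsSiphon (liftSet1 T₁ ∪ liftSet2 T₂) (suppIn (liftSet1 T₁ ∪ liftSet2 T₂) x) R →
      (∀ q ∈ R, q ∉ C) →
      postSetOf (liftSet1 T₁ ∪ liftSet2 T₂) R ∩ suppIn (liftSet1 T₁ ∪ liftSet2 T₂) x = ∅) :
    ∀ R : Finset Q₁, IsSiphon T₁ (suppIn T₁ (projX1 T₁ x)) R → (∀ q ∈ R, q ∉ projC1 C) →
      postSetOf T₁ R ∩ suppIn T₁ (projX1 T₁ x) = ∅ := by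
  intro R hRsiph hRC
  set T : Finset (PTrans (Q₁ × Q₂)) := liftSet1 T₁ ∪ liftSet2 T₂ with hT
  set Rh : Finset (Q₁ × Q₂) := R ×ˢ Finset.univ with hRh
  have memRh : ∀ q : Q₁ × Q₂, q ∈ Rh ↔ q.1 ∈ R := by
    intro q; simp [hRh, Finset.mem_product]
  have hRhsiph : IsSiphon T (suppIn T x) Rh := by
    intro s hs
    obtain ⟨hpre, hsupp⟩ := Finset.mem_inter.mp hs
    obtain ⟨hsT, q, hqRh, hqpost⟩ := mem_preSetOf.mp hpre
    by_cases h2 : s ∈ liftSet2 (Q₁ := Q₁) T₂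
    · obtain ⟨u, hu, r, r', rfl⟩ := mem_liftSet2_iff.mp h2
      rcases mem_post_iff.mp hqpost with rfl | rfl
      · exact mem_postSetOf.mpr ⟨hsT, (r, u.1),
          (memRh (r, u.1)).mpr ((memRh ((lift2 u r r').2.2.1)).mp hqRh),
          mem_pre_iff.mpr (Or.inl rfl)⟩
      · exact mem_postSetOf.mpr ⟨hsT, (r', u.2.1),
          (memRh (r', u.2.1)).mpr ((memRh ((lift2 u r r').2.2.2)).mp hqRh),
          mem_pre_iff.mpr (Or.inr rfl)⟩
    · have h1 : s ∈ liftSet1 (Q₂ := Q₂) T₁ := by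
        rcases Finset.mem_union.mp hsT with h' | h'
        · exact h'
        · exact absurd h' h2
      obtain ⟨t, ht, r, r', rfl⟩ := mem_liftSet1_iff.mp h1
      have hxs : x (lift1 t r r') ≠ 0 := (mem_suppIn.mp hsupp).2
      have htsupp : t ∈ suppIn T₁ (projX1 T₁ x) := by
        have := suppIn_of_lift1 h1 hxs
        rwa [projT1_lift1] at this
      have htpre : t ∈ preSetOf T₁ R := by
        refine mem_preSetOf.mpr ⟨ht, ?_⟩
        rcases mem_post_iff.mp hqpost with rfl | rfl
        · exact ⟨t.2.2.1, (memRh _).mp hqRh, mem_post_iff.mpr (Or.inl rfl)⟩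
        · exact ⟨t.2.2.2, (memRh _).mp hqRh, mem_post_iff.mpr (Or.inr rfl)⟩
      obtain ⟨-, q₁, hq₁R, hq₁pre⟩ :=
        mem_postSetOf.mp (hRsiph (Finset.mem_inter.mpr ⟨htpre, htsupp⟩))
      rcases mem_pre_iff.mp hq₁pre with rfl | rfl
      · exact mem_postSetOf.mpr ⟨hsT, (t.1, r), (memRh _).mpr hq₁R,
          mem_pre_iff.mpr (Or.inl rfl)⟩
      · exact mem_postSetOf.mpr ⟨hsT, (t.2.1, r'), (memRh _).mpr hq₁R,
          mem_pre_iff.mpr (Or.inr rfl)⟩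
  have hnone : ∀ q ∈ Rh, q ∉ C := by
    intro q hq hmem
    exact hRC q.1 ((memRh q).mp hq) (Multiset.mem_map_of_mem Prod.fst hmem)
  have hempty := h Rh hRhsiph hnone
  rw [Finset.eq_empty_iff_forall_notMem] at hempty ⊢
  intro t htmem
  obtain ⟨htpost, htsupp⟩ := Finset.mem_inter.mp htmem
  obtain ⟨ht1, q₁, hq₁R, hq₁pre⟩ := mem_postSetOf.mp htpost
  obtain ⟨r, r', hsmem, hxs⟩ := exists_lift1_of_suppIn htsupp
  have hsT : lift1 t r r' ∈ T := Finset.mem_union_left _ hsmem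
  refine hempty (lift1 t r r') (Finset.mem_inter.mpr ⟨?_, mem_suppIn.mpr ⟨hsT, hxs⟩⟩)
  rcases mem_pre_iff.mp hq₁pre with rfl | rfl
  · exact mem_postSetOf.mpr ⟨hsT, (t.1, r), (memRh _).mpr hq₁R,
      mem_pre_iff.mpr (Or.inl rfl)⟩
  · exact mem_postSetOf.mpr ⟨hsT, (t.2.1, r'), (memRh _).mpr hq₁R,
      mem_pre_iff.mpr (Or.inr rfl)⟩

lemma terminal_proj1 {T₁ : Finset (PTrans Q₁)} {T₂ : Finset (PTrans Q₂)}
    {C : Multiset (Q₁ × Q₂)}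
    (hC : Terminal (liftSet1 T₁ ∪ liftSet2 T₂) C) : Terminal T₁ (projC1 C) := by
  intro t ht hpre
  have h1 : t.1 ∈ projC1 C := Multiset.mem_of_le hpre (mem_pre_iff.mpr (Or.inl rfl))
  obtain ⟨a, haC, ha1⟩ := Multiset.mem_map.mp h1
  obtain ⟨C₂, rfl⟩ := Multiset.exists_cons_of_mem haC
  have h2 : t.2.1 ∈ projC1 C₂ := by
    have : pre t = t.1 ::ₘ {t.2.1} := rfl
    rw [this, projC1, Multiset.map_cons, ha1] at hpre
    have := (Multiset.cons_le_cons_iff t.1).mp hpre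
    exact Multiset.mem_of_le this (Multiset.mem_singleton_self _)
  obtain ⟨b, hbC, hb1⟩ := Multiset.mem_map.mp h2
  have haeq : a = (t.1, a.2) := Prod.ext ha1 rfl
  have hbeq : b = (t.2.1, b.2) := Prod.ext hb1 rfl
  have hmemT : lift1 t a.2 b.2 ∈ liftSet1 T₁ ∪ liftSet2 T₂ :=
    Finset.mem_union_left _ (mem_liftSet1_iff.mpr ⟨t, ht, a.2, b.2, rfl⟩)
  have hprele : pre (lift1 t a.2 b.2) ≤ a ::ₘ C₂ := by
    have : pre (lift1 t a.2 b.2) = a ::ₘ {b} := by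
      rw [haeq, hbeq]; rfl
    rw [this]
    exact Multiset.cons_le_cons a (Multiset.singleton_le.mpr hbC)
  have hsil := hC _ hmemT hprele
  have := congrArg (Multiset.map Prod.fst) hsil
  unfold SilentT
  unfold SilentT at this
  simpa [pre, post, lift1] using this

end ConjProof4
end PopProt
namespace PopProt
section ConjProof5
set_option linter.unusedSectionVars false
variable {Q₁ Q₂ : Type*} [Fintype Q₁] [DecidableEq Q₁] [Fintype Q₂] [DecidableEq Q₂]

lemma key2 {q₂ : Q₂} (D : Multiset (Q₁ × Q₂)) :
    ((projC2 D).count q₂ : ℤ) = ∑ q₁ : Q₁, (D.count (q₁, q₂) : ℤ) := by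
  rw [count_snd]; push_cast; ring

lemma flowEq_proj2 (T₁ : Finset (PTrans Q₁)) (T₂ : Finset (PTrans Q₂))
    {C C' : Multiset (Q₁ × Q₂)} {x : PTrans (Q₁ × Q₂) → ℕ}
    (h : FlowEq (liftSet1 T₁ ∪ liftSet2 T₂) C C' x) :
    FlowEq T₂ (projC2 C) (projC2 C') (projX2 T₂ x) := by
  intro q₂
  set T : Finset (PTrans (Q₁ × Q₂)) := liftSet1 T₁ ∪ liftSet2 T₂ with hT
  have claimA : ∀ s : PTrans (Q₁ × Q₂),
      ∑ q₁ : Q₁, ((x s : ℤ) * (((post s).count (q₁, q₂) : ℤ) - ((pre s).count (q₁, q₂) : ℤ)))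
        = (x s : ℤ) * (((post (projT2 s)).count q₂ : ℤ) - ((pre (projT2 s)).count q₂ : ℤ)) := by
    intro s
    rw [← Finset.mul_sum, Finset.sum_sub_distrib, ← key2, ← key2, projC2_pre, projC2_post]
  have claimB : ∑ s ∈ T, (x s : ℤ) *
        (((post (projT2 s)).count q₂ : ℤ) - ((pre (projT2 s)).count q₂ : ℤ))
      = ∑ t ∈ T₂, (projX2 T₂ x t : ℤ) *
        (((post t).count q₂ : ℤ) - ((pre t).count q₂ : ℤ)) := by
    have hz : ∀ s ∈ liftSet1 T₁ \ liftSet2 T₂, (x s : ℤ) *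
        (((post (projT2 s)).count q₂ : ℤ) - ((pre (projT2 s)).count q₂ : ℤ)) = 0 := by
      intro s hs
      obtain ⟨t, ht, r, r', rfl⟩ := mem_liftSet1_iff.mp (Finset.mem_sdiff.mp hs).1
      rw [projT2_lift1]
      simp [pre, post]
    have hmaps : ∀ s ∈ liftSet2 (Q₁ := Q₁) T₂, projT2 s ∈ T₂ := by
      intro s hs
      obtain ⟨t, ht, r, r', rfl⟩ := mem_liftSet2_iff.mp hs
      rw [projT2_lift2]; exact ht
    rw [hT, Finset.union_comm, ← Finset.union_sdiff_self_eq_union,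
      Finset.sum_union Finset.disjoint_sdiff,
      Finset.sum_eq_zero hz, add_zero,
      ← Finset.sum_fiberwise_of_maps_to hmaps
        (fun s => (x s : ℤ) * (((post (projT2 s)).count q₂ : ℤ) - ((pre (projT2 s)).count q₂ : ℤ)))]
    refine Finset.sum_congr rfl fun t _ => ?_
    have : ∀ s ∈ (liftSet2 (Q₁ := Q₁) T₂).filter (fun s => projT2 s = t),
        (x s : ℤ) * (((post (projT2 s)).count q₂ : ℤ) - ((pre (projT2 s)).count q₂ : ℤ))
          = (x s : ℤ) * (((post t).count q₂ : ℤ) - ((pre t).count q₂ : ℤ)) := by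
      intro s hs
      rw [(Finset.mem_filter.mp hs).2]
    rw [Finset.sum_congr rfl this, ← Finset.sum_mul, projX2]
    push_cast
    ring
  calc ((projC2 C').count q₂ : ℤ)
      = ∑ q₁ : Q₁, (C'.count (q₁, q₂) : ℤ) := key2 C'
    _ = ∑ q₁ : Q₁, ((C.count (q₁, q₂) : ℤ) + ∑ s ∈ T, (x s : ℤ) *
          (((post s).count (q₁, q₂) : ℤ) - ((pre s).count (q₁, q₂) : ℤ))) :=
        Finset.sum_congr rfl fun q₁ _ => h (q₁, q₂)
    _ = (∑ q₁ : Q₁, (C.count (q₁, q₂) : ℤ)) + ∑ s ∈ T, ∑ q₁ : Q₁, (x s : ℤ) *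
          (((post s).count (q₁, q₂) : ℤ) - ((pre s).count (q₁, q₂) : ℤ)) := by
        rw [Finset.sum_add_distrib, Finset.sum_comm]
    _ = ((projC2 C).count q₂ : ℤ) + ∑ t ∈ T₂, (projX2 T₂ x t : ℤ) *
          (((post t).count q₂ : ℤ) - ((pre t).count q₂ : ℤ)) := by
        rw [← key2, Finset.sum_congr rfl (fun s _ => claimA s), claimB]

lemma suppIn_of_lift2 {T₂ : Finset (PTrans Q₂)} {x : PTrans (Q₁ × Q₂) → ℕ}
    {s : PTrans (Q₁ × Q₂)} (hs : s ∈ liftSet2 (Q₁ := Q₁) T₂) (hx : x s ≠ 0) :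
    projT2 s ∈ suppIn T₂ (projX2 T₂ x) := by
  obtain ⟨t, ht, r, r', rfl⟩ := mem_liftSet2_iff.mp hs
  rw [projT2_lift2]
  refine mem_suppIn.mpr ⟨ht, fun h0 => hx ?_⟩
  simp only [projX2] at h0
  exact Finset.sum_eq_zero_iff.mp h0 (lift2 t r r')
    (Finset.mem_filter.mpr ⟨hs, projT2_lift2 t r r'⟩)

lemma exists_lift2_of_suppIn {T₂ : Finset (PTrans Q₂)} {x : PTrans (Q₁ × Q₂) → ℕ}
    {t : PTrans Q₂} (ht : t ∈ suppIn T₂ (projX2 (Q₁ := Q₁) T₂ x)) :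
    ∃ r r' : Q₁, lift2 t r r' ∈ liftSet2 (Q₁ := Q₁) T₂ ∧ x (lift2 t r r') ≠ 0 := by
  obtain ⟨ht1, hx⟩ := mem_suppIn.mp ht
  simp only [projX2] at hx
  obtain ⟨s, hsmem, hxs⟩ := Finset.exists_ne_zero_of_sum_ne_zero hx
  obtain ⟨hs1, hps⟩ := Finset.mem_filter.mp hsmem
  obtain ⟨t₀, ht₀, r, r', rfl⟩ := mem_liftSet2_iff.mp hs1
  rw [projT2_lift2] at hps
  subst hps
  exact ⟨r, r', hs1, hxs⟩

lemma trapCond_proj2 (T₁ : Finset (PTrans Q₁)) (T₂ : Finset (PTrans Q₂))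
    {C' : Multiset (Q₁ × Q₂)} {x : PTrans (Q₁ × Q₂) → ℕ}
    (h : ∀ R : Finset (Q₁ × Q₂),
      IsTrap (liftSet1 T₁ ∪ liftSet2 T₂) (suppIn (liftSet1 T₁ ∪ liftSet2 T₂) x) R →
      (∀ q ∈ R, q ∉ C') →
      preSetOf (liftSet1 T₁ ∪ liftSet2 T₂) R ∩ suppIn (liftSet1 T₁ ∪ liftSet2 T₂) x = ∅) :
    ∀ R : Finset Q₂, IsTrap T₂ (suppIn T₂ (projX2 T₂ x)) R → (∀ q ∈ R, q ∉ projC2 C') →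
      preSetOf T₂ R ∩ suppIn T₂ (projX2 T₂ x) = ∅ := by
  intro R hRtrap hRC'
  set T : Finset (PTrans (Q₁ × Q₂)) := liftSet1 T₁ ∪ liftSet2 T₂ with hT
  set Rh : Finset (Q₁ × Q₂) := Finset.univ ×ˢ R with hRh
  have memRh : ∀ q : Q₁ × Q₂, q ∈ Rh ↔ q.2 ∈ R := by
    intro q; simp [hRh, Finset.mem_product]
  have hRhtrap : IsTrap T (suppIn T x) Rh := by
    intro s hs
    obtain ⟨hpost, hsupp⟩ := Finset.mem_inter.mp hs
    obtain ⟨hsT, q, hqRh, hqpre⟩ := mem_postSetOf.mp hpost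
    by_cases h1 : s ∈ liftSet1 (Q₂ := Q₂) T₁
    · obtain ⟨u, hu, r, r', rfl⟩ := mem_liftSet1_iff.mp h1
      rcases mem_pre_iff.mp hqpre with rfl | rfl
      · exact mem_preSetOf.mpr ⟨hsT, (u.2.2.1, r),
          (memRh (u.2.2.1, r)).mpr ((memRh ((lift1 u r r').1)).mp hqRh),
          mem_post_iff.mpr (Or.inl rfl)⟩
      · exact mem_preSetOf.mpr ⟨hsT, (u.2.2.2, r'),
          (memRh (u.2.2.2, r')).mpr ((memRh ((lift1 u r r').2.1)).mp hqRh),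
          mem_post_iff.mpr (Or.inr rfl)⟩
    · have h2 : s ∈ liftSet2 (Q₁ := Q₁) T₂ := by
        rcases Finset.mem_union.mp hsT with h' | h'
        · exact absurd h' h1
        · exact h'
      obtain ⟨t, ht, r, r', rfl⟩ := mem_liftSet2_iff.mp h2
      have hxs : x (lift2 t r r') ≠ 0 := (mem_suppIn.mp hsupp).2
      have htsupp : t ∈ suppIn T₂ (projX2 T₂ x) := by
        have := suppIn_of_lift2 h2 hxs
        rwa [projT2_lift2] at this
      have htpost : t ∈ postSetOf T₂ R := by
        refine mem_postSetOf.mpr ⟨ht, ?_⟩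
        rcases mem_pre_iff.mp hqpre with rfl | rfl
        · exact ⟨t.1, (memRh _).mp hqRh, mem_pre_iff.mpr (Or.inl rfl)⟩
        · exact ⟨t.2.1, (memRh _).mp hqRh, mem_pre_iff.mpr (Or.inr rfl)⟩
      obtain ⟨-, q₂, hq₂R, hq₂post⟩ :=
        mem_preSetOf.mp (hRtrap (Finset.mem_inter.mpr ⟨htpost, htsupp⟩))
      rcases mem_post_iff.mp hq₂post with rfl | rfl
      · exact mem_preSetOf.mpr ⟨hsT, (r, t.2.2.1), (memRh _).mpr hq₂R,
          mem_post_iff.mpr (Or.inl rfl)⟩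
      · exact mem_preSetOf.mpr ⟨hsT, (r', t.2.2.2), (memRh _).mpr hq₂R,
          mem_post_iff.mpr (Or.inr rfl)⟩
  have hnone : ∀ q ∈ Rh, q ∉ C' := by
    intro q hq hmem
    exact hRC' q.2 ((memRh q).mp hq) (Multiset.mem_map_of_mem Prod.snd hmem)
  have hempty := h Rh hRhtrap hnone
  rw [Finset.eq_empty_iff_forall_notMem] at hempty ⊢
  intro t htmem
  obtain ⟨htpre, htsupp⟩ := Finset.mem_inter.mp htmem
  obtain ⟨ht1, q₂, hq₂R, hq₂post⟩ := mem_preSetOf.mp htpre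
  obtain ⟨r, r', hsmem, hxs⟩ := exists_lift2_of_suppIn htsupp
  have hsT : lift2 t r r' ∈ T := Finset.mem_union_right _ hsmem
  refine hempty (lift2 t r r') (Finset.mem_inter.mpr ⟨?_, mem_suppIn.mpr ⟨hsT, hxs⟩⟩)
  rcases mem_post_iff.mp hq₂post with rfl | rfl
  · exact mem_preSetOf.mpr ⟨hsT, (r, t.2.2.1), (memRh _).mpr hq₂R,
      mem_post_iff.mpr (Or.inl rfl)⟩
  · exact mem_preSetOf.mpr ⟨hsT, (r', t.2.2.2), (memRh _).mpr hq₂R,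
      mem_post_iff.mpr (Or.inr rfl)⟩

lemma siphonCond_proj2 (T₁ : Finset (PTrans Q₁)) (T₂ : Finset (PTrans Q₂))
    {C : Multiset (Q₁ × Q₂)} {x : PTrans (Q₁ × Q₂) → ℕ}
    (h : ∀ R : Finset (Q₁ × Q₂),
      IsSiphon (liftSet1 T₁ ∪ liftSet2 T₂) (suppIn (liftSet1 T₁ ∪ liftSet2 T₂) x) R →
      (∀ q ∈ R, q ∉ C) →
      postSetOf (liftSet1 T₁ ∪ liftSet2 T₂) R ∩ suppIn (liftSet1 T₁ ∪ liftSet2 T₂) x = ∅) :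
    ∀ R : Finset Q₂, IsSiphon T₂ (suppIn T₂ (projX2 T₂ x)) R → (∀ q ∈ R, q ∉ projC2 C) →
      postSetOf T₂ R ∩ suppIn T₂ (projX2 T₂ x) = ∅ := by
  intro R hRsiph hRC
  set T : Finset (PTrans (Q₁ × Q₂)) := liftSet1 T₁ ∪ liftSet2 T₂ with hT
  set Rh : Finset (Q₁ × Q₂) := Finset.univ ×ˢ R with hRh
  have memRh : ∀ q : Q₁ × Q₂, q ∈ Rh ↔ q.2 ∈ R := by
    intro q; simp [hRh, Finset.mem_product]
  have hRhsiph : IsSiphon T (suppIn T x) Rh := by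
    intro s hs
    obtain ⟨hpre, hsupp⟩ := Finset.mem_inter.mp hs
    obtain ⟨hsT, q, hqRh, hqpost⟩ := mem_preSetOf.mp hpre
    by_cases h1 : s ∈ liftSet1 (Q₂ := Q₂) T₁
    · obtain ⟨u, hu, r, r', rfl⟩ := mem_liftSet1_iff.mp h1
      rcases mem_post_iff.mp hqpost with rfl | rfl
      · exact mem_postSetOf.mpr ⟨hsT, (u.1, r),
          (memRh (u.1, r)).mpr ((memRh ((lift1 u r r').2.2.1)).mp hqRh),
          mem_pre_iff.mpr (Or.inl rfl)⟩
      · exact mem_postSetOf.mpr ⟨hsT, (u.2.1, r'),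
          (memRh (u.2.1, r')).mpr ((memRh ((lift1 u r r').2.2.2)).mp hqRh),
          mem_pre_iff.mpr (Or.inr rfl)⟩
    · have h2 : s ∈ liftSet2 (Q₁ := Q₁) T₂ := by
        rcases Finset.mem_union.mp hsT with h' | h'
        · exact absurd h' h1
        · exact h'
      obtain ⟨t, ht, r, r', rfl⟩ := mem_liftSet2_iff.mp h2
      have hxs : x (lift2 t r r') ≠ 0 := (mem_suppIn.mp hsupp).2
      have htsupp : t ∈ suppIn T₂ (projX2 T₂ x) := by
        have := suppIn_of_lift2 h2 hxs
        rwa [projT2_lift2] at this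
      have htpre : t ∈ preSetOf T₂ R := by
        refine mem_preSetOf.mpr ⟨ht, ?_⟩
        rcases mem_post_iff.mp hqpost with rfl | rfl
        · exact ⟨t.2.2.1, (memRh _).mp hqRh, mem_post_iff.mpr (Or.inl rfl)⟩
        · exact ⟨t.2.2.2, (memRh _).mp hqRh, mem_post_iff.mpr (Or.inr rfl)⟩
      obtain ⟨-, q₂, hq₂R, hq₂pre⟩ :=
        mem_postSetOf.mp (hRsiph (Finset.mem_inter.mpr ⟨htpre, htsupp⟩))
      rcases mem_pre_iff.mp hq₂pre with rfl | rfl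
      · exact mem_postSetOf.mpr ⟨hsT, (r, t.1), (memRh _).mpr hq₂R,
          mem_pre_iff.mpr (Or.inl rfl)⟩
      · exact mem_postSetOf.mpr ⟨hsT, (r', t.2.1), (memRh _).mpr hq₂R,
          mem_pre_iff.mpr (Or.inr rfl)⟩
  have hnone : ∀ q ∈ Rh, q ∉ C := by
    intro q hq hmem
    exact hRC q.2 ((memRh q).mp hq) (Multiset.mem_map_of_mem Prod.snd hmem)
  have hempty := h Rh hRhsiph hnone
  rw [Finset.eq_empty_iff_forall_notMem] at hempty ⊢
  intro t htmem
  obtain ⟨htpost, htsupp⟩ := Finset.mem_inter.mp htmem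
  obtain ⟨ht1, q₂, hq₂R, hq₂pre⟩ := mem_postSetOf.mp htpost
  obtain ⟨r, r', hsmem, hxs⟩ := exists_lift2_of_suppIn htsupp
  have hsT : lift2 t r r' ∈ T := Finset.mem_union_right _ hsmem
  refine hempty (lift2 t r r') (Finset.mem_inter.mpr ⟨?_, mem_suppIn.mpr ⟨hsT, hxs⟩⟩)
  rcases mem_pre_iff.mp hq₂pre with rfl | rfl
  · exact mem_postSetOf.mpr ⟨hsT, (r, t.1), (memRh _).mpr hq₂R,
      mem_pre_iff.mpr (Or.inl rfl)⟩
  · exact mem_postSetOf.mpr ⟨hsT, (r', t.2.1), (memRh _).mpr hq₂R,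
      mem_pre_iff.mpr (Or.inr rfl)⟩

lemma terminal_proj2 {T₁ : Finset (PTrans Q₁)} {T₂ : Finset (PTrans Q₂)}
    {C : Multiset (Q₁ × Q₂)}
    (hC : Terminal (liftSet1 T₁ ∪ liftSet2 T₂) C) : Terminal T₂ (projC2 C) := by
  intro t ht hpre
  have h1 : t.1 ∈ projC2 C := Multiset.mem_of_le hpre (mem_pre_iff.mpr (Or.inl rfl))
  obtain ⟨a, haC, ha1⟩ := Multiset.mem_map.mp h1
  obtain ⟨C₂, rfl⟩ := Multiset.exists_cons_of_mem haC
  have h2 : t.2.1 ∈ projC2 C₂ := by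
    have : pre t = t.1 ::ₘ {t.2.1} := rfl
    rw [this, projC2, Multiset.map_cons, ha1] at hpre
    have := (Multiset.cons_le_cons_iff t.1).mp hpre
    exact Multiset.mem_of_le this (Multiset.mem_singleton_self _)
  obtain ⟨b, hbC, hb1⟩ := Multiset.mem_map.mp h2
  have haeq : a = (a.1, t.1) := Prod.ext rfl ha1
  have hbeq : b = (b.1, t.2.1) := Prod.ext rfl hb1
  have hmemT : lift2 t a.1 b.1 ∈ liftSet1 T₁ ∪ liftSet2 T₂ :=
    Finset.mem_union_right _ (mem_liftSet2_iff.mpr ⟨t, ht, a.1, b.1, rfl⟩)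
  have hprele : pre (lift2 t a.1 b.1) ≤ a ::ₘ C₂ := by
    have : pre (lift2 t a.1 b.1) = a ::ₘ {b} := by
      rw [haeq, hbeq]; rfl
    rw [this]
    exact Multiset.cons_le_cons a (Multiset.singleton_le.mpr hbC)
  have hsil := hC _ hmemT hprele
  have := congrArg (Multiset.map Prod.snd) hsil
  unfold SilentT
  unfold SilentT at this
  simpa [pre, post, lift2] using this

end ConjProof5
end PopProt
open PopProt in
/-- If `P₁` and `P₂` satisfy StrongConsensus, so does their conjunction. -/
theorem conj_strongConsensus
    {Q₁ Q₂ A : Type*} [Fintype Q₁] [DecidableEq Q₁] [Nonempty Q₁]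
    [Fintype Q₂] [DecidableEq Q₂] [Nonempty Q₂] [Fintype A] [Nonempty A]
    (P₁ : Protocol Q₁ A) (P₂ : Protocol Q₂ A)
    (h1 : StrongConsensus P₁) (h2 : StrongConsensus P₂) :
    StrongConsensus (conj P₁ P₂) := by
  intro X hX
  obtain ⟨b₁, hb₁⟩ := h1 X hX
  obtain ⟨b₂, hb₂⟩ := h2 X hX
  refine ⟨b₁ && b₂, ?_⟩
  intro C' x hpr hterm
  have hTdef : (conj P₁ P₂).T = liftSet1 P₁.T ∪ liftSet2 P₂.T := rfl
  obtain ⟨hflow, htrap, hsiph⟩ := hpr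
  rw [hTdef] at hflow htrap hsiph hterm
  have hinit1 : projC1 (init (conj P₁ P₂) X) = init P₁ X := by
    simp only [projC1, init, conj, Multiset.map_map]
    rfl
  have hinit2 : projC2 (init (conj P₁ P₂) X) = init P₂ X := by
    simp only [projC2, init, conj, Multiset.map_map]
    rfl
  have hp1 : PotReach P₁.T (init P₁ X) (projC1 C') (projX1 P₁.T x) := by
    rw [← hinit1]
    exact ⟨flowEq_proj1 P₁.T P₂.T hflow, trapCond_proj1 P₁.T P₂.T htrap,
      siphonCond_proj1 P₁.T P₂.T hsiph⟩
  have hp2 : PotReach P₂.T (init P₂ X) (projC2 C') (projX2 P₂.T x) := by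
    rw [← hinit2]
    exact ⟨flowEq_proj2 P₁.T P₂.T hflow, trapCond_proj2 P₁.T P₂.T htrap,
      siphonCond_proj2 P₁.T P₂.T hsiph⟩
  have hcons1 := hb₁ (projC1 C') (projX1 P₁.T x) hp1 (terminal_proj1 hterm)
  have hcons2 := hb₂ (projC2 C') (projX2 P₂.T x) hp2 (terminal_proj2 hterm)
  intro q hq
  have e1 := hcons1 q.1 (Multiset.mem_map_of_mem Prod.fst hq)
  have e2 := hcons2 q.2 (Multiset.mem_map_of_mem Prod.snd hq)
  have : (conj P₁ P₂).out q = (P₁.out q.1 && P₂.out q.2) := rfl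
  rw [this, e1, e2]
end
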